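/- arXiv:2506.12569 — 6 statements merged into one kernel-verified Lean document; each statement's English description precedes it below -/
import Mathlib

section
/- Theorem 1, Part (A) (validity of feedback-and-heterogeneity-robust moment functions). Suppose the measurable function φ : 𝒴^{T+1} × 𝒳^T → ℝ satisfies the FHR conditions (i) and (ii). Then for every data generating process ω = (g, π, ν) such that φ(Y_0,…,Y_T, X_1,…,X_T) is absolutely integrable under the induced joint law, the expectation of φ(Y_0,…,Y_T, X_1,…,X_T) under that joint law equals zero. -/
/-!
Theorem 1, Part (A) of Bonhomme, Dano & Graham, "Moment Restrictions for Nonlinear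
Panel Data Models with Feedback".

Backward induction over the periods. Once `Y_t` has been drawn, condition (ii) at `s = t + 1`
says that the fixed-covariate partial integral over the remaining periods does not depend on
`X_{t+1}, …, X_T`; so integrating out `X_{t+1}` against the feedback kernel `g_{t+1}`, a
probability measure, leaves it unchanged. Hence the expectation under feedback coincides, for
every history and every value of the heterogeneity, with the fixed-covariate integral of
condition (i), which vanishes.
-/

open MeasureTheory ProbabilityTheory Function
open scoped ENNReal

noncomputable section

variable {Y X A : Type*} [MeasurableSpace Y] [MeasurableSpace X] [MeasurableSpace A]

/-- Iterated partial integral `∫ φ(y^T, x^T) ∏_{r=t}^{t+n-1} f_r(y_r | y_{r-1}, x_r, a)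
dμ(y_t) ⋯ dμ(y_{t+n-1})`, for a fixed covariate path `x` and heterogeneity `a`.
Histories are encoded as streams `ℕ → Y`, `ℕ → X`; coordinate `r` of the outcome stream
is overwritten by the integration variable for `y_r`. -/
noncomputable def iterInt (μ : Measure Y) (f : ℕ → Y → Y → X → A → ℝ)
    (φ : (ℕ → Y) → (ℕ → X) → ℝ) (a : A) (x : ℕ → X) :
    ℕ → ℕ → (ℕ → Y) → ℝ
  | 0, _, y => φ y x
  | n + 1, t, y =>
      ∫ yt, f t yt (y (t - 1)) (x t) a *
        iterInt μ f φ a x n (t + 1) (Function.update y t yt) ∂μ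

/-- The feedback-and-heterogeneity-robust (FHR) conditions (i) and (ii) for a moment
function `φ` in the panel data model with `T` periods, outcome densities `f_t` with
respect to `μ`:
(i) the full integral of `φ` against `∏_{t=1}^T f_t` vanishes for all
`(y_0, x_1, …, x_T, a)`;
(ii) for every `s = 2, …, T`, the partial integral of `φ` against `∏_{t=s}^T f_t`
does not depend on `(x_s, …, x_T)`. -/
def FHR (μ : Measure Y) (f : ℕ → Y → Y → X → A → ℝ) (T : ℕ)
    (φ : (ℕ → Y) → (ℕ → X) → ℝ) : Prop :=
  (∀ (y : ℕ → Y) (x : ℕ → X) (a : A), iterInt μ f φ a x T 1 y = 0) ∧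
  (∀ s, 2 ≤ s → s ≤ T → ∀ (y : ℕ → Y) (x x' : ℕ → X) (a : A),
    (∀ i, i < s → x i = x' i) →
    iterInt μ f φ a x (T - s + 1) s y = iterInt μ f φ a x' (T - s + 1) s y)

/-- Expected value of `φ(Y^T, X^T)` conditional on heterogeneity `a` and on the history
up to (but not including) period `t`, when `n` outcome periods remain: the period-`t`
outcome is drawn with density `f_t(·|y_{t-1}, x_t, a)` with respect to `μ`, and (as long
as further periods remain) the period-`t+1` covariate is drawn from the feedback kernel
`g (t+1)` evaluated at the current history. -/
noncomputable def pathInt (μ : Measure Y) (f : ℕ → Y → Y → X → A → ℝ)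
    (g : ℕ → Kernel ((ℕ → Y) × (ℕ → X) × A) X)
    (φ : (ℕ → Y) → (ℕ → X) → ℝ) (a : A) :
    ℕ → ℕ → (ℕ → Y) → (ℕ → X) → ℝ
  | 0, _, y, x => φ y x
  | 1, t, y, x =>
      ∫ yt, f t yt (y (t - 1)) (x t) a * φ (Function.update y t yt) x ∂μ
  | n + 2, t, y, x =>
      ∫ yt, f t yt (y (t - 1)) (x t) a *
        ∫ xt, pathInt μ f g φ a (n + 1) (t + 1) (Function.update y t yt)
            (Function.update x (t + 1) xt)
          ∂(g (t + 1) (Function.update y t yt, x, a)) ∂μ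

/-- `ℝ≥0∞`-valued analogue of `pathInt`, used to express absolute integrability of a
moment function under the induced joint law. -/
noncomputable def pathLint (μ : Measure Y) (f : ℕ → Y → Y → X → A → ℝ)
    (g : ℕ → Kernel ((ℕ → Y) × (ℕ → X) × A) X)
    (φ : (ℕ → Y) → (ℕ → X) → ℝ≥0∞) (a : A) :
    ℕ → ℕ → (ℕ → Y) → (ℕ → X) → ℝ≥0∞
  | 0, _, y, x => φ y x
  | 1, t, y, x =>
      ∫⁻ yt, ENNReal.ofReal (f t yt (y (t - 1)) (x t) a) * φ (Function.update y t yt) x ∂μ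
  | n + 2, t, y, x =>
      ∫⁻ yt, ENNReal.ofReal (f t yt (y (t - 1)) (x t) a) *
        ∫⁻ xt, pathLint μ f g φ a (n + 1) (t + 1) (Function.update y t yt)
            (Function.update x (t + 1) xt)
          ∂(g (t + 1) (Function.update y t yt, x, a)) ∂μ

theorem pathInt_eq_iterInt {μ : Measure Y} {f : ℕ → Y → Y → X → A → ℝ} {T : ℕ}
    {φ : (ℕ → Y) → (ℕ → X) → ℝ} {g : ℕ → Kernel ((ℕ → Y) × (ℕ → X) × A) X}
    [∀ t, IsMarkovKernel (g t)]
    (hinv : ∀ s, 2 ≤ s → s ≤ T → ∀ (y : ℕ → Y) (x x' : ℕ → X) (a : A),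
      (∀ i, i < s → x i = x' i) →
      iterInt μ f φ a x (T - s + 1) s y = iterInt μ f φ a x' (T - s + 1) s y)
    (n t : ℕ) (a : A) (y : ℕ → Y) (x : ℕ → X) (ht : 1 ≤ t) (hnt : n + t = T + 1) :
    pathInt μ f g φ a n t y x = iterInt μ f φ a x n t y := by
  induction n generalizing t y x with
  | zero => rfl
  | succ n ih =>
    cases n with
    | zero => rfl
    | succ m =>
      have hinner : ∀ (yt : Y) (xt : X),
          pathInt μ f g φ a (m + 1) (t + 1) (update y t yt) (update x (t + 1) xt) =
            iterInt μ f φ a x (m + 1) (t + 1) (update y t yt) := by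
        intro yt xt
        have hrem : T - (t + 1) + 1 = m + 1 := by omega
        have hfree := hinv (t + 1) (by omega) (by omega) (update y t yt)
          (update x (t + 1) xt) x a (fun i hi => update_of_ne (by omega) xt x)
        rw [hrem] at hfree
        rw [ih (t + 1) _ _ (by omega) (by omega), hfree]
      simp only [pathInt, iterInt, hinner, integral_const, probReal_univ, one_smul]

theorem theorem1_partA_general
    (μ : Measure Y) (T : ℕ)
    (f : ℕ → Y → Y → X → A → ℝ)
    (φ : (ℕ → Y) → (ℕ → X) → ℝ)
    (hFHR : FHR μ f T φ)
    -- the data generating process ω = (g, π, ν)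
    (ν : Measure (Y × X))
    (π : Kernel (Y × X) A)
    (g : ℕ → Kernel ((ℕ → Y) × (ℕ → X) × A) X) (hg : ∀ t, IsMarkovKernel (g t))
    -- arbitrary base streams used to hold the recursively constructed histories
    (y₀ : ℕ → Y) (x₀ : ℕ → X) :
    (∫ p, ∫ a, pathInt μ f g φ a T 1
        (Function.update y₀ 0 p.1) (Function.update x₀ 1 p.2) ∂(π p) ∂ν) = 0 := by
  have hzero : ∀ (p : Y × X) (a : A),
      pathInt μ f g φ a T 1 (update y₀ 0 p.1) (update x₀ 1 p.2) = 0 := by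
    intro p a
    rw [pathInt_eq_iterInt hFHR.2 T 1 a _ _ le_rfl rfl]
    exact hFHR.1 _ _ _
  simp only [hzero, integral_zero]

/-- **Theorem 1, Part (A)**: if the measurable moment function `φ` satisfies the FHR
conditions (i) and (ii), then for every data generating process
`ω = (g, π, ν)` — an initial-condition law `ν` for `(Y_0, X_1)`, a heterogeneity Markov
kernel `π`, and feedback Markov kernels `g_t` — under which `φ(Y_0,…,Y_T, X_1,…,X_T)` is
absolutely integrable, the expectation of `φ` under the induced joint law is zero. -/
theorem theorem1_partA
    (μ : Measure Y) [SigmaFinite μ] (T : ℕ) (hT : 2 ≤ T)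
    (f : ℕ → Y → Y → X → A → ℝ)
    (hf_meas : ∀ t, Measurable fun p : Y × Y × X × A => f t p.1 p.2.1 p.2.2.1 p.2.2.2)
    (hf_nonneg : ∀ t y ylag x a, 0 ≤ f t y ylag x a)
    (hf_one : ∀ t (ylag : Y) (x : X) (a : A), ∫⁻ y, ENNReal.ofReal (f t y ylag x a) ∂μ = 1)
    (φ : (ℕ → Y) → (ℕ → X) → ℝ)
    (hφ_meas : Measurable fun p : (ℕ → Y) × (ℕ → X) => φ p.1 p.2)
    (hFHR : FHR μ f T φ)
    -- the data generating process ω = (g, π, ν)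
    (ν : Measure (Y × X)) [IsProbabilityMeasure ν]
    (π : Kernel (Y × X) A) [IsMarkovKernel π]
    (g : ℕ → Kernel ((ℕ → Y) × (ℕ → X) × A) X) (hg : ∀ t, IsMarkovKernel (g t))
    -- arbitrary base streams used to hold the recursively constructed histories
    (y₀ : ℕ → Y) (x₀ : ℕ → X)
    -- absolute integrability of φ under the induced joint law
    (hint : (∫⁻ p, ∫⁻ a, pathLint μ f g (fun y x => ENNReal.ofReal |φ y x|) a T 1
        (Function.update y₀ 0 p.1) (Function.update x₀ 1 p.2) ∂(π p) ∂ν) ≠ ⊤) :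
    (∫ p, ∫ a, pathInt μ f g φ a T 1
        (Function.update y₀ 0 p.1) (Function.update x₀ 1 p.2) ∂(π p) ∂ν) = 0 :=
  theorem1_partA_general μ T f φ hFHR ν π g hg y₀ x₀

end
end

section
/- Instrumented first-difference moment functions are FHR. Suppose that for t ∈ {T−1, T} there exist measurable functions η_t : 𝒴^{t+1} × 𝒳^t → ℝ and a measurable function b : 𝒴 × 𝒳 × 𝒜 → ℝ such that, for both t = T−1 and t = T and for all arguments, ∫ η_t(y_0,…,y_{t−1}, y, x_1,…,x_t) f_t(y | y_{t−1}, x_t, a) dμ(y) = b(y_0, x_1, a). Then for any bounded measurable m : 𝒴^{T−1} × 𝒳^{T−1} → ℝ, the function φ(y^T, x^T) = [η_T(y_0,…,y_T, x_1,…,x_T) − η_{T−1}(y_0,…,y_{T−1}, x_1,…,x_{T−1})] · m(y_0,…,y_{T−2}, x_1,…,x_{T−1}) satisfies the FHR conditions (i) and (ii), provided all the integrals appearing in conditions (i)–(ii) converge absolutely. -/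
/-!
Integrating out `y_T` turns `(η_T - η_{T-1}) · m` into `(b - η_{T-1}) · m`, since neither
`η_{T-1}` nor `m` involves `y_T`; integrating out `y_{T-1}` then gives `(b - b) · m = 0`, since
neither `b` nor `m` involves `y_{T-1}`. Every further integration preserves `0`, which gives
condition (i) and condition (ii) for `s < T`; for `s = T` the partial integral
`(b(y_0, x_1, a) - η_{T-1}) · m` does not involve `x_T`.
-/

open MeasureTheory Function
open scoped ENNReal

noncomputable section

variable {Y X A : Type*} [MeasurableSpace Y] [MeasurableSpace X] [MeasurableSpace A]

/-- `ℝ≥0∞`-valued analogue of `iterInt`, expressing absolute convergence. -/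
noncomputable def iterLint (μ : Measure Y) (f : ℕ → Y → Y → X → A → ℝ)
    (φ : (ℕ → Y) → (ℕ → X) → ℝ≥0∞) (a : A) (x : ℕ → X) :
    ℕ → ℕ → (ℕ → Y) → ℝ≥0∞
  | 0, _, y => φ y x
  | n + 1, t, y =>
      ∫⁻ yt, ENNReal.ofReal (f t yt (y (t - 1)) (x t) a) *
        iterLint μ f φ a x n (t + 1) (Function.update y t yt) ∂μ

section Density

variable {μ : Measure Y} {p g : Y → ℝ} {c : ℝ}

theorem integrable_of_lintegral_ofReal_eq_one (hp : AEStronglyMeasurable p μ)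
    (hp0 : ∀ v, 0 ≤ p v) (hp1 : ∫⁻ v, ENNReal.ofReal (p v) ∂μ = 1) : Integrable p μ :=
  (lintegral_ofReal_ne_top_iff_integrable hp (.of_forall hp0)).1 (by simp [hp1])

theorem integral_eq_one_of_lintegral_ofReal_eq_one (hp : AEStronglyMeasurable p μ)
    (hp0 : ∀ v, 0 ≤ p v) (hp1 : ∫⁻ v, ENNReal.ofReal (p v) ∂μ = 1) : ∫ v, p v ∂μ = 1 := by
  rw [integral_eq_lintegral_of_nonneg_ae (.of_forall hp0) hp, hp1, ENNReal.toReal_one]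

theorem integral_mul_sub_const (hp : Integrable p μ) (hp1 : ∫ v, p v ∂μ = 1)
    (hpg : Integrable (fun v => p v * (g v - c)) μ) :
    ∫ v, p v * (g v - c) ∂μ = ∫ v, p v * g v ∂μ - c := by
  have hpg' : Integrable (fun v => p v * g v) μ :=
    (hpg.add (hp.mul_const c)).congr (.of_forall fun v => by simp only [Pi.add_apply]; ring)
  simp_rw [mul_sub]
  rw [integral_sub hpg' (hp.mul_const c), integral_mul_const, hp1, one_mul]

-- No integrability of `p * g` is needed: if `p * (g - c)` is not integrable, its integral is
-- the junk value `0`.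
theorem integral_mul_sub_eq_zero (hp : Integrable p μ) (hp1 : ∫ v, p v ∂μ = 1)
    (hmean : ∫ v, p v * g v ∂μ = c) : ∫ v, p v * (g v - c) ∂μ = 0 := by
  by_cases hpg : Integrable (fun v => p v * (g v - c)) μ
  · rw [integral_mul_sub_const hp hp1 hpg, hmean, sub_self]
  · exact integral_undef hpg

end Density

section IterInt

omit [MeasurableSpace X] [MeasurableSpace A]

variable {μ : Measure Y} {f : ℕ → Y → Y → X → A → ℝ} {a : A} {x : ℕ → X}

theorem iterInt_zero (φ : (ℕ → Y) → (ℕ → X) → ℝ) (t : ℕ) (y : ℕ → Y) :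
    iterInt μ f φ a x 0 t y = φ y x := rfl

theorem iterInt_succ (φ : (ℕ → Y) → (ℕ → X) → ℝ) (n t : ℕ) (y : ℕ → Y) :
    iterInt μ f φ a x (n + 1) t y =
      ∫ v, f t v (y (t - 1)) (x t) a * iterInt μ f φ a x n (t + 1) (update y t v) ∂μ := rfl

theorem iterInt_eq_zero_of_inner {φ : (ℕ → Y) → (ℕ → X) → ℝ} {n t : ℕ} (j : ℕ)
    (h : ∀ y, iterInt μ f φ a x n (t + j) y = 0) (y : ℕ → Y) :
    iterInt μ f φ a x (n + j) t y = 0 := by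
  induction j generalizing t y with
  | zero => exact h y
  | succ j ih =>
    have h' : ∀ y, iterInt μ f φ a x n (t + 1 + j) y = 0 := by
      rwa [add_right_comm]
    simp only [← add_assoc, iterInt_succ, ih h', mul_zero, integral_zero]

theorem integrable_of_iterLint_one_ne_top {ψ : (ℕ → Y) → (ℕ → X) → ℝ} {t : ℕ} {y : ℕ → Y}
    (hf : Measurable fun v => f t v (y (t - 1)) (x t) a)
    (hf0 : ∀ v, 0 ≤ f t v (y (t - 1)) (x t) a)
    (hψ : Measurable fun v => ψ (update y t v) x)
    (h : iterLint μ f (fun y x => ENNReal.ofReal |ψ y x|) a x 1 t y ≠ ∞) :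
    Integrable (fun v => f t v (y (t - 1)) (x t) a * ψ (update y t v) x) μ := by
  refine ⟨(hf.mul hψ).aestronglyMeasurable,
    (hasFiniteIntegral_iff_norm _).2 (lt_top_iff_ne_top.2 ?_)⟩
  have h' : ∫⁻ v, ENNReal.ofReal (f t v (y (t - 1)) (x t) a) *
      ENNReal.ofReal |ψ (update y t v) x| ∂μ ≠ ∞ := h
  simpa only [Real.norm_eq_abs, abs_mul, abs_of_nonneg (hf0 _), ENNReal.ofReal_mul (hf0 _)]
    using h'

variable {t : ℕ} {y : ℕ → Y}

theorem iterInt_one_eq_of_condMean {η c k : (ℕ → Y) → (ℕ → X) → ℝ} {β : ℝ}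
    (hp : Integrable (fun v => f t v (y (t - 1)) (x t) a) μ)
    (hp1 : ∫ v, f t v (y (t - 1)) (x t) a ∂μ = 1)
    (hc : ∀ v, c (update y t v) x = c y x) (hk : ∀ v, k (update y t v) x = k y x)
    (hmean : ∫ v, f t v (y (t - 1)) (x t) a * η (update y t v) x ∂μ = β)
    (hint : Integrable (fun v => f t v (y (t - 1)) (x t) a *
      ((η (update y t v) x - c (update y t v) x) * k (update y t v) x)) μ) :
    iterInt μ f (fun y x => (η y x - c y x) * k y x) a x 1 t y = (β - c y x) * k y x := by
  simp only [hc, hk, ← mul_assoc] at hint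
  rw [iterInt_succ]
  simp only [iterInt_zero, hc, hk, ← mul_assoc]
  rw [integral_mul_const]
  rcases eq_or_ne (k y x) 0 with h0 | h0
  · rw [h0, mul_zero, mul_zero]
  rw [integral_mul_sub_const hp hp1 ((integrable_mul_const_iff h0.isUnit _).1 hint), hmean]

theorem iterInt_succ_eq_zero_of_condMean {φ : (ℕ → Y) → (ℕ → X) → ℝ}
    {β : (ℕ → Y) → ℝ} {c k : (ℕ → Y) → (ℕ → X) → ℝ} {n : ℕ}
    (hp : Integrable (fun v => f t v (y (t - 1)) (x t) a) μ)
    (hp1 : ∫ v, f t v (y (t - 1)) (x t) a ∂μ = 1)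
    (hinner : ∀ y, iterInt μ f φ a x n (t + 1) y = (β y - c y x) * k y x)
    (hβ : ∀ v, β (update y t v) = β y) (hk : ∀ v, k (update y t v) x = k y x)
    (hmean : ∫ v, f t v (y (t - 1)) (x t) a * c (update y t v) x ∂μ = β y) :
    iterInt μ f φ a x (n + 1) t y = 0 := by
  rw [iterInt_succ]
  simp only [hinner, hβ, hk]
  calc _ = -(∫ v, f t v (y (t - 1)) (x t) a * (c (update y t v) x - β y) ∂μ) * k y x := by
        rw [← integral_neg, ← integral_mul_const]
        congr 1 with v
        ring
    _ = 0 := by rw [integral_mul_sub_eq_zero hp hp1 hmean, neg_zero, zero_mul]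

end IterInt

theorem instrumented_first_difference_FHR_general
    (μ : Measure Y) (T : ℕ) (hT : 2 ≤ T)
    (f : ℕ → Y → Y → X → A → ℝ)
    (hf_meas : ∀ t, Measurable fun p : Y × Y × X × A => f t p.1 p.2.1 p.2.2.1 p.2.2.2)
    (hf_nonneg : ∀ t ylag x a y, 0 ≤ f t y ylag x a)
    (hf_one : ∀ t (ylag : Y) (x : X) (a : A), ∫⁻ y, ENNReal.ofReal (f t y ylag x a) ∂μ = 1)
    -- η_T and η_{T−1}, measurable functions of (y^T, x^T) resp. (y^{T−1}, x^{T−1})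
    (ηT ηT1 : (ℕ → Y) → (ℕ → X) → ℝ)
    (hηT_meas : Measurable fun p : (ℕ → Y) × (ℕ → X) => ηT p.1 p.2)
    (hηT1_meas : Measurable fun p : (ℕ → Y) × (ℕ → X) => ηT1 p.1 p.2)
    (hηT1_dep : ∀ (y y' : ℕ → Y) (x x' : ℕ → X),
      (∀ i, i ≤ T - 1 → y i = y' i) → (∀ i, i ≤ T - 1 → x i = x' i) → ηT1 y x = ηT1 y' x')
    -- the common conditional mean b(y_0, x_1, a)
    (b : Y → X → A → ℝ)
    (hmeanT : ∀ (y : ℕ → Y) (x : ℕ → X) (a : A),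
      (∫ yt, f T yt (y (T - 1)) (x T) a * ηT (Function.update y T yt) x ∂μ) =
        b (y 0) (x 1) a)
    (hmeanT1 : ∀ (y : ℕ → Y) (x : ℕ → X) (a : A),
      (∫ yt, f (T - 1) yt (y (T - 2)) (x (T - 1)) a *
          ηT1 (Function.update y (T - 1) yt) x ∂μ) = b (y 0) (x 1) a)
    -- the instrument: a bounded measurable function of (y^{T−2}, x^{T−1})
    (m : (ℕ → Y) → (ℕ → X) → ℝ)
    (hm_meas : Measurable fun p : (ℕ → Y) × (ℕ → X) => m p.1 p.2)
    (hm_dep : ∀ (y y' : ℕ → Y) (x x' : ℕ → X),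
      (∀ i, i ≤ T - 2 → y i = y' i) → (∀ i, i ≤ T - 1 → x i = x' i) → m y x = m y' x')
    -- absolute convergence of all the integrals appearing in conditions (i)–(ii)
    (hconv : ∀ s, 1 ≤ s → s ≤ T → ∀ (y : ℕ → Y) (x : ℕ → X) (a : A),
      iterLint μ f (fun y' x' => ENNReal.ofReal |(ηT y' x' - ηT1 y' x') * m y' x'|) a x
        (T - s + 1) s y ≠ ⊤) :
    FHR μ f T (fun y x => (ηT y x - ηT1 y x) * m y x) := by
  set φ : (ℕ → Y) → (ℕ → X) → ℝ := fun y x => (ηT y x - ηT1 y x) * m y x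
  have hp_meas t ylag xx a : Measurable fun v => f t v ylag xx a :=
    (hf_meas t).comp (measurable_prodMk_right (y := (ylag, xx, a)))
  have hp t ylag xx a : Integrable (fun v => f t v ylag xx a) μ :=
    integrable_of_lintegral_ofReal_eq_one (hp_meas t ylag xx a).aestronglyMeasurable
      (hf_nonneg t ylag xx a) (hf_one t ylag xx a)
  have hp1 t ylag xx a : ∫ v, f t v ylag xx a ∂μ = 1 :=
    integral_eq_one_of_lintegral_ofReal_eq_one (hp_meas t ylag xx a).aestronglyMeasurable
      (hf_nonneg t ylag xx a) (hf_one t ylag xx a)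
  have hlast a x y : iterInt μ f φ a x 1 T y = (b (y 0) (x 1) a - ηT1 y x) * m y x := by
    have hconvT := hconv T (by omega) le_rfl y x a
    rw [Nat.sub_self] at hconvT
    refine iterInt_one_eq_of_condMean (hp ..) (hp1 ..)
      (fun v => hηT1_dep _ _ _ _ (fun i hi => update_of_ne (by omega) _ _) fun _ _ => rfl)
      (fun v => hm_dep _ _ _ _ (fun i hi => update_of_ne (by omega) _ _) fun _ _ => rfl)
      (hmeanT y x a)
      (integrable_of_iterLint_one_ne_top (hp_meas ..) (fun v => hf_nonneg ..) ?_ hconvT)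
    exact ((hηT_meas.sub hηT1_meas).mul hm_meas).comp
      ((measurable_update y).prodMk measurable_const)
  have hpenult a x y : iterInt μ f φ a x 2 (T - 1) y = 0 := by
    refine iterInt_succ_eq_zero_of_condMean (β := fun y => b (y 0) (x 1) a) (hp ..) (hp1 ..)
      (fun y => by rw [Nat.sub_add_cancel (by omega : 1 ≤ T)]; exact hlast a x y)
      (fun v => by rw [update_of_ne (by omega)])
      (fun v => hm_dep _ _ _ _ (fun i hi => update_of_ne (by omega) _ _) fun _ _ => rfl) ?_
    rw [Nat.sub_sub]
    exact hmeanT1 y x a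
  have hvanish a x s (hs : s < T) y : iterInt μ f φ a x (T - s + 1) s y = 0 := by
    have h := iterInt_eq_zero_of_inner (T - 1 - s)
      (fun y => by rw [show s + (T - 1 - s) = T - 1 by omega]; exact hpenult a x y) y
    rwa [show 2 + (T - 1 - s) = T - s + 1 by omega] at h
  refine ⟨fun y x a => ?_, fun s _ hsT y x x' a hxx' => ?_⟩
  · have h := hvanish a x 1 (by omega) y
    rwa [Nat.sub_add_cancel (by omega : 1 ≤ T)] at h
  rcases hsT.lt_or_eq with hsT | rfl
  · rw [hvanish a x s hsT, hvanish a x' s hsT]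
  rw [Nat.sub_self, hlast, hlast, hxx' 1 (by omega),
    hηT1_dep y y x x' (fun _ _ => rfl) (fun i hi => hxx' i (by omega)),
    hm_dep y y x x' (fun _ _ => rfl) (fun i hi => hxx' i (by omega))]

/-- **Instrumented first differences are FHR.** Suppose for `t ∈ {T−1, T}` the
measurable functions `η_t(y^t, x^t)` satisfy
`∫ η_t(y^{t−1}, y, x^t) f_t(y | y_{t−1}, x_t, a) dμ(y) = b(y_0, x_1, a)` for all
arguments. Then for any bounded measurable `m(y^{T−2}, x^{T−1})`, the function
`φ(y^T, x^T) = [η_T(y^T, x^T) − η_{T−1}(y^{T−1}, x^{T−1})] · m(y^{T−2}, x^{T−1})`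
satisfies the FHR conditions (i) and (ii), provided all the integrals appearing in
conditions (i)–(ii) converge absolutely. -/
theorem instrumented_first_difference_FHR
    (μ : Measure Y) [SigmaFinite μ] (T : ℕ) (hT : 2 ≤ T)
    (f : ℕ → Y → Y → X → A → ℝ)
    (hf_meas : ∀ t, Measurable fun p : Y × Y × X × A => f t p.1 p.2.1 p.2.2.1 p.2.2.2)
    (hf_nonneg : ∀ t ylag x a y, 0 ≤ f t y ylag x a)
    (hf_one : ∀ t (ylag : Y) (x : X) (a : A), ∫⁻ y, ENNReal.ofReal (f t y ylag x a) ∂μ = 1)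
    -- η_T and η_{T−1}, measurable functions of (y^T, x^T) resp. (y^{T−1}, x^{T−1})
    (ηT ηT1 : (ℕ → Y) → (ℕ → X) → ℝ)
    (hηT_meas : Measurable fun p : (ℕ → Y) × (ℕ → X) => ηT p.1 p.2)
    (hηT1_meas : Measurable fun p : (ℕ → Y) × (ℕ → X) => ηT1 p.1 p.2)
    (hηT_dep : ∀ (y y' : ℕ → Y) (x x' : ℕ → X),
      (∀ i, i ≤ T → y i = y' i) → (∀ i, i ≤ T → x i = x' i) → ηT y x = ηT y' x')
    (hηT1_dep : ∀ (y y' : ℕ → Y) (x x' : ℕ → X),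
      (∀ i, i ≤ T - 1 → y i = y' i) → (∀ i, i ≤ T - 1 → x i = x' i) → ηT1 y x = ηT1 y' x')
    -- the common conditional mean b(y_0, x_1, a)
    (b : Y → X → A → ℝ)
    (hb_meas : Measurable fun p : Y × X × A => b p.1 p.2.1 p.2.2)
    (hmeanT : ∀ (y : ℕ → Y) (x : ℕ → X) (a : A),
      (∫ yt, f T yt (y (T - 1)) (x T) a * ηT (Function.update y T yt) x ∂μ) =
        b (y 0) (x 1) a)
    (hmeanT1 : ∀ (y : ℕ → Y) (x : ℕ → X) (a : A),
      (∫ yt, f (T - 1) yt (y (T - 2)) (x (T - 1)) a *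
          ηT1 (Function.update y (T - 1) yt) x ∂μ) = b (y 0) (x 1) a)
    -- the instrument: a bounded measurable function of (y^{T−2}, x^{T−1})
    (m : (ℕ → Y) → (ℕ → X) → ℝ)
    (hm_meas : Measurable fun p : (ℕ → Y) × (ℕ → X) => m p.1 p.2)
    (hm_bdd : ∃ C, ∀ (y : ℕ → Y) (x : ℕ → X), |m y x| ≤ C)
    (hm_dep : ∀ (y y' : ℕ → Y) (x x' : ℕ → X),
      (∀ i, i ≤ T - 2 → y i = y' i) → (∀ i, i ≤ T - 1 → x i = x' i) → m y x = m y' x')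
    -- absolute convergence of all the integrals appearing in conditions (i)–(ii)
    (hconv : ∀ s, 1 ≤ s → s ≤ T → ∀ (y : ℕ → Y) (x : ℕ → X) (a : A),
      iterLint μ f (fun y' x' => ENNReal.ofReal |(ηT y' x' - ηT1 y' x') * m y' x'|) a x
        (T - s + 1) s y ≠ ⊤) :
    FHR μ f T (fun y x => (ηT y x - ηT1 y x) * m y x) :=
  instrumented_first_difference_FHR_general μ T hT f hf_meas hf_nonneg hf_one ηT ηT1 hηT_meas
    hηT1_meas hηT1_dep b hmeanT hmeanT1 m hm_meas hm_dep hconv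

end
end

section
/- Simple FHR moment functions in the MPH model. Consider the MPH model with T ≥ 2 periods (f_t = f_θ for every t). For each fixed t ∈ {2,…,T} and any bounded measurable function m : (0,∞)^{t−1} × (ℝ^k)^{t−1} → ℝ, the function φ(y^T, x^T) = [ρ_θ(y_t, y_{t−1}, x_t) − ρ_θ(y_{t−1}, y_{t−2}, x_{t−1})] · m(y_0,…,y_{t−2}, x_1,…,x_{t−1}) satisfies the FHR conditions (i) and (ii) with respect to the MPH densities f_θ. -/
/-!
Under `f_θ(· | y₋, x, a)` the variable `ρ_θ(Y, y₋, x) = Λ(Y) e^{γ y₋ + x'β}` is exponential with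
mean `e^{-a}`, whatever `(y₋, x)`: the integrated hazard `Λ` carries `λ(y) dy` on `(0, ∞)` to
Lebesgue measure, which reduces both moments to `∫ c e^{-cu} du = 1` and `∫ u c e^{-cu} du = 1/c`.
Integrating `y_t` out of `φ` therefore leaves `(e^{-a} − ρ_{t−1}) m`, which involves no covariate
after period `t − 1`, and integrating `y_{t−1}` out of that leaves `0`. The periods after `t`
integrate out trivially because every density has mass one.
-/

open MeasureTheory Function Real Set
open scoped ENNReal

noncomputable section

section MPH

variable {k : ℕ}

/-- Integrated baseline hazard `Λ(y) = ∫₀^y λ(u) du`. -/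
noncomputable def intHaz (lam : ℝ → ℝ) (y : ℝ) : ℝ := ∫ u in Set.Ioc (0:ℝ) y, lam u

/-- `ρ_θ(y, y₋, x) = Λ_α(y) e^{γ y₋ + x'β}` in the MPH model. -/
noncomputable def mphRho (lam : ℝ → ℝ) (γ : ℝ) (β : Fin k → ℝ)
    (y ylag : ℝ) (x : Fin k → ℝ) : ℝ :=
  intHaz lam y * Real.exp (γ * ylag + ∑ i, x i * β i)

/-- Conditional duration density
`f_θ(y | y₋, x, a) = λ_α(y) e^{γ y₋ + x'β + a} exp(−Λ_α(y) e^{γ y₋ + x'β + a})`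
of the MPH model. -/
noncomputable def mphDensity (lam : ℝ → ℝ) (γ : ℝ) (β : Fin k → ℝ)
    (y ylag : ℝ) (x : Fin k → ℝ) (a : ℝ) : ℝ :=
  lam y * Real.exp (γ * ylag + ∑ i, x i * β i + a) *
    Real.exp (-(intHaz lam y * Real.exp (γ * ylag + ∑ i, x i * β i + a)))

end MPH

open Filter

section IteratedIntegral

variable {Y X A : Type*} [MeasurableSpace Y] {μ : Measure Y} {f : ℕ → Y → Y → X → A → ℝ}
  {φ : (ℕ → Y) → (ℕ → X) → ℝ} {a : A} {x : ℕ → X}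

theorem iterInt_eq_of_dependsOn (hf : ∀ s ylag xs, ∫ ys, f s ys ylag xs a ∂μ = 1) :
    ∀ {n s : ℕ}, DependsOn (φ · x) (Iio s) → ∀ y, iterInt μ f φ a x n s y = φ y x
  | 0, _, _, _ => rfl
  | n + 1, s, hφ, y => by
    have h_upd (ys : Y) : iterInt μ f φ a x n (s + 1) (update y s ys) = φ y x := by
      rw [iterInt_eq_of_dependsOn hf (hφ.mono (Iio_subset_Iio s.le_succ))]
      exact hφ fun i hi => update_of_ne (ne_of_lt hi) ..
    simp only [iterInt, h_upd, integral_mul_const, hf, one_mul]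

theorem iterInt_succ_of_dependsOn (hf : ∀ s ylag xs, ∫ ys, f s ys ylag xs a ∂μ = 1) {n s : ℕ}
    (hφ : DependsOn (φ · x) (Iio (s + 1))) (y : ℕ → Y) :
    iterInt μ f φ a x (n + 1) s y =
      ∫ ys, f s ys (y (s - 1)) (x s) a * φ (update y s ys) x ∂μ := by
  simp only [iterInt, iterInt_eq_of_dependsOn hf hφ]

theorem iterInt_add_eq_zero {n : ℕ} :
    ∀ {s d : ℕ}, (∀ y, iterInt μ f φ a x n (s + d) y = 0) →
      ∀ y, iterInt μ f φ a x (n + d) s y = 0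
  | _, 0, h, y => h y
  | s, d + 1, h, y => by
    have h_succ := iterInt_add_eq_zero (s := s + 1) (d := d) (by rwa [add_right_comm])
    show iterInt μ f φ a x (n + d + 1) s y = 0
    simp only [iterInt, h_succ, mul_zero, integral_zero]

end IteratedIntegral

section SimpleMoment

variable {Y X A : Type*} {ρ : Y → Y → X → ℝ} {t : ℕ} {m : (ℕ → Y) → (ℕ → X) → ℝ}

def simpleMoment (ρ : Y → Y → X → ℝ) (t : ℕ) (m : (ℕ → Y) → (ℕ → X) → ℝ) :
    (ℕ → Y) → (ℕ → X) → ℝ :=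
  fun y x => (ρ (y t) (y (t - 1)) (x t) - ρ (y (t - 1)) (y (t - 2)) (x (t - 1))) * m y x

theorem dependsOn_simpleMoment_durations (hm : ∀ x, DependsOn (m · x) (Iic (t - 2)))
    (x : ℕ → X) : DependsOn (simpleMoment ρ t m · x) (Iio (t + 1)) := by
  intro y y' h
  simp only [mem_Iio] at h
  simp only [simpleMoment]
  rw [h t (by omega), h (t - 1) (by omega), h (t - 2) (by omega)]
  congr 1
  exact hm x fun i hi => h i (by rw [mem_Iic] at hi; omega)

theorem dependsOn_simpleMoment_covariates (hm : ∀ y, DependsOn (m y) (Iic (t - 1)))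
    (y : ℕ → Y) : DependsOn (simpleMoment ρ t m y) (Iio (t + 1)) := by
  intro x x' h
  simp only [mem_Iio] at h
  simp only [simpleMoment]
  rw [h t (by omega), h (t - 1) (by omega)]
  congr 1
  exact hm y fun i hi => h i (by rw [mem_Iic] at hi; omega)

variable [MeasurableSpace Y] {μ : Measure Y} {f : ℕ → Y → Y → X → A → ℝ} {κ : A → ℝ}
  {a : A} {x : ℕ → X}

-- `hρ` says that `ρ(Y_s, y_{s-1}, x_s)` has conditional mean `κ a`; it is stated for every
-- centring constant `r` so that no integrability hypothesis is needed.
theorem iterInt_simpleMoment_self (hf : ∀ s ylag xs, ∫ ys, f s ys ylag xs a ∂μ = 1)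
    (hρ : ∀ s ylag xs r, ∫ ys, f s ys ylag xs a * (ρ ys ylag xs - r) ∂μ = κ a - r)
    (ht : 2 ≤ t) (hm : ∀ x, DependsOn (m · x) (Iic (t - 2))) (n : ℕ) (y : ℕ → Y) :
    iterInt μ f (simpleMoment ρ t m) a x (n + 1) t y =
      (κ a - ρ (y (t - 1)) (y (t - 2)) (x (t - 1))) * m y x := by
  have h_upd (ys : Y) : simpleMoment ρ t m (update y t ys) x =
      (ρ ys (y (t - 1)) (x t) - ρ (y (t - 1)) (y (t - 2)) (x (t - 1))) * m y x := by
    simp only [simpleMoment, update_self, update_of_ne (by omega : t - 1 ≠ t),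
      update_of_ne (by omega : t - 2 ≠ t)]
    congr 1
    exact hm x fun i hi => update_of_ne (by rw [mem_Iic] at hi; omega) ..
  simp only [iterInt_succ_of_dependsOn hf (dependsOn_simpleMoment_durations hm x), h_upd,
    ← mul_assoc, integral_mul_const, hρ]

theorem iterInt_simpleMoment_pred (hf : ∀ s ylag xs, ∫ ys, f s ys ylag xs a ∂μ = 1)
    (hρ : ∀ s ylag xs r, ∫ ys, f s ys ylag xs a * (ρ ys ylag xs - r) ∂μ = κ a - r)
    (ht : 2 ≤ t) (hm : ∀ x, DependsOn (m · x) (Iic (t - 2))) (n : ℕ) (y : ℕ → Y) :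
    iterInt μ f (simpleMoment ρ t m) a x (n + 2) (t - 1) y = 0 := by
  have h_upd (ys : Y) : iterInt μ f (simpleMoment ρ t m) a x (n + 1) (t - 1 + 1)
      (update y (t - 1) ys) = -((ρ ys (y (t - 2)) (x (t - 1)) - κ a) * m y x) := by
    rw [Nat.sub_add_cancel (by omega), iterInt_simpleMoment_self hf hρ ht hm, update_self,
      update_of_ne (by omega : t - 2 ≠ t - 1),
      show m (update y (t - 1) ys) x = m y x from
        hm x fun i hi => update_of_ne (by rw [mem_Iic] at hi; omega) ..]
    ring
  rw [iterInt]
  simp only [Nat.sub_sub, h_upd, mul_neg, ← mul_assoc, integral_neg, integral_mul_const,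
    hρ, sub_self, zero_mul, neg_zero]

theorem iterInt_simpleMoment_of_lt (hf : ∀ s ylag xs, ∫ ys, f s ys ylag xs a ∂μ = 1)
    (hρ : ∀ s ylag xs r, ∫ ys, f s ys ylag xs a * (ρ ys ylag xs - r) ∂μ = κ a - r)
    (ht : 2 ≤ t) (hm : ∀ x, DependsOn (m · x) (Iic (t - 2))) {s T : ℕ} (hst : s < t)
    (htT : t ≤ T) (y : ℕ → Y) :
    iterInt μ f (simpleMoment ρ t m) a x (T - s + 1) s y = 0 := by
  have h_pred (y : ℕ → Y) :
      iterInt μ f (simpleMoment ρ t m) a x (T - t + 2) (s + (t - 1 - s)) y = 0 := by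
    rw [show s + (t - 1 - s) = t - 1 by omega]
    exact iterInt_simpleMoment_pred hf hρ ht hm _ y
  rw [show T - s + 1 = T - t + 2 + (t - 1 - s) by omega]
  exact iterInt_add_eq_zero h_pred y

theorem fhr_simpleMoment {T : ℕ} (hf : ∀ s ylag xs a, ∫ ys, f s ys ylag xs a ∂μ = 1)
    (hρ : ∀ s ylag xs a r, ∫ ys, f s ys ylag xs a * (ρ ys ylag xs - r) ∂μ = κ a - r)
    (ht : 2 ≤ t) (htT : t ≤ T) (hm_dur : ∀ x, DependsOn (m · x) (Iic (t - 2)))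
    (hm_cov : ∀ y, DependsOn (m y) (Iic (t - 1))) :
    FHR μ f T (simpleMoment ρ t m) := by
  refine ⟨fun y x a => ?_, fun s hs hsT y x x' a hxx' => ?_⟩
  · rw [show T = T - 1 + 1 by omega]
    exact iterInt_simpleMoment_of_lt (hf · · · a) (hρ · · · a) ht hm_dur (by omega) htT y
  rcases lt_trichotomy s t with hst | rfl | hts
  · rw [iterInt_simpleMoment_of_lt (hf · · · a) (hρ · · · a) ht hm_dur hst htT,
      iterInt_simpleMoment_of_lt (hf · · · a) (hρ · · · a) ht hm_dur hst htT]
  · rw [iterInt_simpleMoment_self (hf · · · a) (hρ · · · a) ht hm_dur,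
      iterInt_simpleMoment_self (hf · · · a) (hρ · · · a) ht hm_dur, hxx' (s - 1) (by omega),
      show m y x = m y x' from hm_cov y fun i hi => hxx' i (by rw [mem_Iic] at hi; omega)]
  · have h_iio := Iio_subset_Iio (Nat.succ_le_of_lt hts)
    have h_dur (x : ℕ → X) := (dependsOn_simpleMoment_durations (ρ := ρ) hm_dur x).mono h_iio
    rw [iterInt_eq_of_dependsOn (hf · · · a) (h_dur x),
      iterInt_eq_of_dependsOn (hf · · · a) (h_dur x')]
    exact dependsOn_simpleMoment_covariates hm_cov y fun i hi => hxx' i (h_iio hi)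

end SimpleMoment

section IntegratedHazard

variable {lam : ℝ → ℝ} {a b y : ℝ}

theorem intHaz_of_nonpos (hy : y ≤ 0) : intHaz lam y = 0 := by
  rw [intHaz, Ioc_eq_empty (not_lt.mpr hy), Measure.restrict_empty, integral_zero_measure]

theorem integrableOn_Ioc_of_nonneg (hint : ∀ y, 0 < y → IntegrableOn lam (Ioc 0 y))
    (ha : 0 ≤ a) : IntegrableOn lam (Ioc a b) := by
  rcases le_or_gt b a with hba | hab
  · rw [Ioc_eq_empty (not_lt.mpr hba)]
    exact integrableOn_empty
  · exact (hint b (ha.trans_lt hab)).mono_set (Ioc_subset_Ioc_left ha)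

theorem intHaz_sub (hint : ∀ y, 0 < y → IntegrableOn lam (Ioc 0 y)) (ha : 0 ≤ a) (hab : a ≤ b) :
    intHaz lam b - intHaz lam a = ∫ u in a..b, lam u := by
  have h_int {c : ℝ} (hc : 0 ≤ c) : IntervalIntegrable lam volume 0 c :=
    (intervalIntegrable_iff_integrableOn_Ioc_of_le hc).mpr (integrableOn_Ioc_of_nonneg hint le_rfl)
  rw [intHaz, intHaz, ← intervalIntegral.integral_of_le (ha.trans hab),
    ← intervalIntegral.integral_of_le ha,
    intervalIntegral.integral_interval_sub_left (h_int (ha.trans hab)) (h_int ha)]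

theorem intHaz_strictMonoOn (hpos : ∀ y ∈ Ioi (0 : ℝ), 0 < lam y)
    (hint : ∀ y, 0 < y → IntegrableOn lam (Ioc 0 y)) : StrictMonoOn (intHaz lam) (Ici 0) := by
  intro a ha b _ hab
  have h_pos : 0 < ∫ u in a..b, lam u :=
    intervalIntegral.intervalIntegral_pos_of_pos_on
      ((intervalIntegrable_iff_integrableOn_Ioc_of_le hab.le).mpr
        (integrableOn_Ioc_of_nonneg hint ha))
      (fun u hu => hpos u (lt_of_le_of_lt ha hu.1)) hab
  linarith [intHaz_sub hint ha hab.le]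

theorem intHaz_pos (hpos : ∀ y ∈ Ioi (0 : ℝ), 0 < lam y)
    (hint : ∀ y, 0 < y → IntegrableOn lam (Ioc 0 y)) (hy : 0 < y) : 0 < intHaz lam y := by
  simpa [intHaz_of_nonpos le_rfl] using
    intHaz_strictMonoOn hpos hint self_mem_Ici hy.le hy

theorem intHaz_monotone (hpos : ∀ y ∈ Ioi (0 : ℝ), 0 < lam y)
    (hint : ∀ y, 0 < y → IntegrableOn lam (Ioc 0 y)) : Monotone (intHaz lam) := by
  intro a b hab
  rcases le_or_gt a 0 with ha | ha
  · rw [intHaz_of_nonpos ha]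
    exact setIntegral_nonneg measurableSet_Ioc fun u hu => (hpos u hu.1).le
  · exact (intHaz_strictMonoOn hpos hint).monotoneOn ha.le (ha.le.trans hab) hab

theorem intHaz_surjOn (hint : ∀ y, 0 < y → IntegrableOn lam (Ioc 0 y))
    (htop : Tendsto (intHaz lam) atTop atTop) : SurjOn (intHaz lam) (Ici 0) (Ici 0) := by
  intro v hv
  obtain ⟨B, hvB, hB⟩ := ((htop.eventually_ge_atTop v).and (eventually_ge_atTop 0)).exists
  have h_cont : ContinuousOn (intHaz lam) (Icc 0 B) :=
    intervalIntegral.continuousOn_primitive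
      ((integrableOn_Icc_iff_integrableOn_Ioc).mpr (integrableOn_Ioc_of_nonneg hint le_rfl))
  obtain ⟨y, hy, rfl⟩ := intermediate_value_Icc hB h_cont ⟨by rwa [intHaz_of_nonpos le_rfl], hvB⟩
  exact ⟨y, hy.1, rfl⟩

theorem preimage_intHaz_Ioc (hpos : ∀ y ∈ Ioi (0 : ℝ), 0 < lam y)
    (hint : ∀ y, 0 < y → IntegrableOn lam (Ioc 0 y)) (ha : 0 ≤ a) (hb : 0 ≤ b) :
    intHaz lam ⁻¹' Ioc (intHaz lam a) (intHaz lam b) = Ioc a b := by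
  ext y
  rcases le_or_gt y 0 with hy | hy
  · have h_nonneg := intHaz_monotone hpos hint ha
    simp only [mem_preimage, mem_Ioc, intHaz_of_nonpos hy, intHaz_of_nonpos le_rfl] at h_nonneg ⊢
    constructor <;> intro h <;> linarith [h.1]
  · have h := intHaz_strictMonoOn hpos hint
    simp only [mem_preimage, mem_Ioc, h.lt_iff_lt ha hy.le, h.le_iff_le hy.le hb]

end IntegratedHazard

section ChangeOfVariables

theorem MeasureTheory.Measure.restrict_Ioi_eq_of_Ioc {μ ν : Measure ℝ}
    [IsLocallyFiniteMeasure μ] {c : ℝ} (h : ∀ u v, c ≤ u → u < v → μ (Ioc u v) = ν (Ioc u v)) :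
    μ.restrict (Ioi c) = ν.restrict (Ioi c) := by
  refine Measure.ext_of_Ioc _ _ fun u v _ => ?_
  rw [Measure.restrict_apply measurableSet_Ioc, Measure.restrict_apply measurableSet_Ioc,
    Ioc_inter_Ioi]
  rcases lt_or_ge (u ⊔ c) v with huv | hvu
  · exact h _ _ le_sup_right huv
  · rw [Ioc_eq_empty (not_lt.mpr hvu), measure_empty, measure_empty]

variable {lam : ℝ → ℝ}

theorem measurePreserving_intHaz (hpos : ∀ y ∈ Ioi (0 : ℝ), 0 < lam y)
    (hint : ∀ y, 0 < y → IntegrableOn lam (Ioc 0 y)) (htop : Tendsto (intHaz lam) atTop atTop) :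
    MeasurePreserving (intHaz lam)
      ((volume.restrict (Ioi 0)).withDensity fun y => ENNReal.ofReal (lam y))
      (volume.restrict (Ioi 0)) := by
  have h_meas := (intHaz_monotone hpos hint).measurable
  refine ⟨h_meas, ?_⟩
  have h_supp : ∀ᵐ u ∂((volume.restrict (Ioi 0)).withDensity fun y => ENNReal.ofReal (lam y)).map
      (intHaz lam), u ∈ Ioi 0 := by
    refine (ae_map_iff h_meas.aemeasurable measurableSet_Ioi).mpr <|
      (withDensity_absolutelyContinuous _ _).ae_le ?_
    filter_upwards [ae_restrict_mem measurableSet_Ioi] with y hy using intHaz_pos hpos hint hy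
  rw [← Measure.restrict_eq_self_of_ae_mem h_supp]
  refine (Measure.restrict_Ioi_eq_of_Ioc fun u v hu huv => ?_).symm
  obtain ⟨a, ha, rfl⟩ := intHaz_surjOn hint htop hu
  obtain ⟨b, hb, rfl⟩ := intHaz_surjOn hint htop (mem_Ici.mpr (hu.trans huv.le))
  have hab : a ≤ b := ((intHaz_strictMonoOn hpos hint).lt_iff_lt ha hb).mp huv |>.le
  have h_nonneg : 0 ≤ᵐ[volume.restrict (Ioc a b)] lam := by
    filter_upwards [ae_restrict_mem measurableSet_Ioc] with y hy using
      (hpos y (lt_of_le_of_lt ha hy.1)).le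
  rw [Measure.map_apply h_meas measurableSet_Ioc, preimage_intHaz_Ioc hpos hint ha hb,
    withDensity_apply _ measurableSet_Ioc, Measure.restrict_restrict measurableSet_Ioc,
    Ioc_inter_Ioi, max_eq_left ha,
    ← ofReal_integral_eq_lintegral_ofReal (integrableOn_Ioc_of_nonneg hint ha) h_nonneg,
    ← intervalIntegral.integral_of_le hab, ← intHaz_sub hint ha hab, Real.volume_Ioc]

theorem integral_mul_comp_intHaz (hmeas : Measurable lam) (hpos : ∀ y ∈ Ioi (0 : ℝ), 0 < lam y)
    (hint : ∀ y, 0 < y → IntegrableOn lam (Ioc 0 y)) (htop : Tendsto (intHaz lam) atTop atTop)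
    {g : ℝ → ℝ} (hg : Measurable g) :
    ∫ y in Ioi 0, lam y * g (intHaz lam y) = ∫ u in Ioi 0, g u := by
  set ν := (volume.restrict (Ioi 0)).withDensity fun y => ENNReal.ofReal (lam y)
  have hΛ : MeasurePreserving (intHaz lam) ν (volume.restrict (Ioi 0)) :=
    measurePreserving_intHaz hpos hint htop
  calc ∫ y in Ioi 0, lam y * g (intHaz lam y)
      = ∫ y, g (intHaz lam y) ∂ν := by
        rw [integral_withDensity_eq_integral_toReal_smul hmeas.ennreal_ofReal
          (Eventually.of_forall fun _ => ENNReal.ofReal_lt_top)]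
        refine setIntegral_congr_fun measurableSet_Ioi fun y hy => ?_
        rw [ENNReal.toReal_ofReal (hpos y hy).le, smul_eq_mul]
    _ = ∫ u, g u ∂ν.map (intHaz lam) :=
        (integral_map hΛ.measurable.aemeasurable (hΛ.map_eq ▸ hg.aestronglyMeasurable)).symm
    _ = ∫ u in Ioi 0, g u := by rw [hΛ.map_eq]

end ChangeOfVariables

section Exponential

variable {c : ℝ}

theorem integral_exp_neg_mul_Ioi (hc : 0 < c) : ∫ u in Ioi (0 : ℝ), exp (-(c * u)) = c⁻¹ := by
  have := integral_exp_mul_Ioi (neg_lt_zero.mpr hc) 0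
  simp only [neg_mul, mul_zero, exp_zero, div_neg] at this
  rw [this]
  ring

theorem integral_mul_exp_neg_mul_Ioi (hc : 0 < c) :
    ∫ u in Ioi (0 : ℝ), u * exp (-(c * u)) = (c ^ 2)⁻¹ := by
  have := integral_rpow_mul_exp_neg_mul_Ioi two_pos hc
  norm_num [Real.Gamma_two] at this
  exact this

end Exponential

section MPH

variable {k : ℕ} {lam : ℝ → ℝ} {γ : ℝ} {β : Fin k → ℝ}

theorem integral_mphDensity (hmeas : Measurable lam) (hpos : ∀ y ∈ Ioi (0 : ℝ), 0 < lam y)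
    (hint : ∀ y, 0 < y → IntegrableOn lam (Ioc 0 y)) (htop : Tendsto (intHaz lam) atTop atTop)
    (ylag : ℝ) (x : Fin k → ℝ) (a : ℝ) :
    ∫ y in Ioi 0, mphDensity lam γ β y ylag x a = 1 := by
  set c := exp (γ * ylag + ∑ i, x i * β i + a) with hc_def
  have h_eq (y : ℝ) :
      mphDensity lam γ β y ylag x a = lam y * (c * exp (-(c * intHaz lam y))) := by
    rw [mphDensity, ← hc_def, mul_comm (intHaz lam y) c, mul_assoc]
  simp only [h_eq]
  rw [integral_mul_comp_intHaz (g := fun u => c * exp (-(c * u))) hmeas hpos hint htop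
    (by fun_prop), integral_const_mul,
    integral_exp_neg_mul_Ioi (exp_pos _), mul_inv_cancel₀ (exp_pos _).ne']

theorem integral_mphDensity_mul_mphRho_sub (hmeas : Measurable lam)
    (hpos : ∀ y ∈ Ioi (0 : ℝ), 0 < lam y) (hint : ∀ y, 0 < y → IntegrableOn lam (Ioc 0 y))
    (htop : Tendsto (intHaz lam) atTop atTop) (ylag : ℝ) (x : Fin k → ℝ) (a r : ℝ) :
    ∫ y in Ioi 0, mphDensity lam γ β y ylag x a * (mphRho lam γ β y ylag x - r) =
      exp (-a) - r := by
  set w := exp (γ * ylag + ∑ i, x i * β i) with hw_def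
  set c := exp (γ * ylag + ∑ i, x i * β i + a) with hc_def
  have hc : 0 < c := exp_pos _
  have h_eq (y : ℝ) : mphDensity lam γ β y ylag x a * (mphRho lam γ β y ylag x - r) =
      lam y * ((c * w) * (intHaz lam y * exp (-(c * intHaz lam y))) -
        (r * c) * exp (-(c * intHaz lam y))) := by
    rw [mphDensity, mphRho, ← hw_def, ← hc_def, mul_comm (intHaz lam y) c]
    ring
  have h_exp : IntegrableOn (fun u => exp (-(c * u))) (Ioi 0) :=
    Integrable.of_integral_ne_zero (by rw [integral_exp_neg_mul_Ioi hc]; positivity)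
  have h_mul_exp : IntegrableOn (fun u => u * exp (-(c * u))) (Ioi 0) :=
    Integrable.of_integral_ne_zero (by rw [integral_mul_exp_neg_mul_Ioi hc]; positivity)
  simp only [h_eq]
  rw [integral_mul_comp_intHaz
      (g := fun u => (c * w) * (u * exp (-(c * u))) - (r * c) * exp (-(c * u)))
      hmeas hpos hint htop (by fun_prop),
    integral_sub (h_mul_exp.const_mul _) (h_exp.const_mul _), integral_const_mul,
    integral_const_mul, integral_mul_exp_neg_mul_Ioi hc, integral_exp_neg_mul_Ioi hc]
  have hw : w ≠ 0 := (exp_pos _).ne'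
  have hc_eq : c = w * exp a := exp_add _ _
  rw [hc_eq, exp_neg]
  field_simp

end MPH

section

variable {k : ℕ}

theorem mph_simple_moments_FHR_general
    (lam : ℝ → ℝ) (hlam_meas : Measurable lam)
    (hlam_pos : ∀ y ∈ Set.Ioi (0:ℝ), 0 < lam y)
    (hlam_int : ∀ y : ℝ, 0 < y → IntegrableOn lam (Set.Ioc 0 y) volume)
    (hlam_top : Filter.Tendsto (intHaz lam) Filter.atTop Filter.atTop)
    (γ : ℝ) (β : Fin k → ℝ)
    (T : ℕ) (t : ℕ) (ht1 : 2 ≤ t) (ht2 : t ≤ T)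
    (m : (ℕ → ℝ) → (ℕ → Fin k → ℝ) → ℝ)
    (hm_dep : ∀ (y y' : ℕ → ℝ) (x x' : ℕ → Fin k → ℝ),
      (∀ i, i ≤ t - 2 → y i = y' i) → (∀ i, i ≤ t - 1 → x i = x' i) → m y x = m y' x') :
    FHR (volume.restrict (Set.Ioi (0:ℝ)))
      (fun _ y ylag x a => mphDensity lam γ β y ylag x a) T
      (fun y x =>
        (mphRho lam γ β (y t) (y (t - 1)) (x t) -
          mphRho lam γ β (y (t - 1)) (y (t - 2)) (x (t - 1))) * m y x) := by
  exact fhr_simpleMoment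
    (fun _ ylag x a => integral_mphDensity hlam_meas hlam_pos hlam_int hlam_top ylag x a)
    (fun _ ylag x a r =>
      integral_mphDensity_mul_mphRho_sub hlam_meas hlam_pos hlam_int hlam_top ylag x a r)
    ht1 ht2 (fun x _ _ h => hm_dep _ _ x x h fun _ _ => rfl)
    (fun y _ _ h => hm_dep y y _ _ (fun _ _ => rfl) h)

/-- **Simple FHR moment functions in the MPH model.** In the MPH model with `T ≥ 2`
periods (common density `f_θ` in every period, durations carrying Lebesgue measure on
`(0, ∞)`), for each fixed `t ∈ {2,…,T}` and any bounded measurable function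
`m(y_0,…,y_{t−2}, x_1,…,x_{t−1})`, the moment function
`φ(y^T, x^T) = [ρ_θ(y_t, y_{t−1}, x_t) − ρ_θ(y_{t−1}, y_{t−2}, x_{t−1})] · m`
satisfies the FHR conditions (i) and (ii). -/
theorem mph_simple_moments_FHR
    (lam : ℝ → ℝ) (hlam_meas : Measurable lam)
    (hlam_pos : ∀ y ∈ Set.Ioi (0:ℝ), 0 < lam y)
    (hlam_int : ∀ y : ℝ, 0 < y → IntegrableOn lam (Set.Ioc 0 y) volume)
    (hlam_top : Filter.Tendsto (intHaz lam) Filter.atTop Filter.atTop)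
    (γ : ℝ) (β : Fin k → ℝ)
    (T : ℕ) (hT : 2 ≤ T) (t : ℕ) (ht1 : 2 ≤ t) (ht2 : t ≤ T)
    (m : (ℕ → ℝ) → (ℕ → Fin k → ℝ) → ℝ)
    (hm_meas : Measurable fun p : (ℕ → ℝ) × (ℕ → Fin k → ℝ) => m p.1 p.2)
    (hm_bdd : ∃ C, ∀ (y : ℕ → ℝ) (x : ℕ → Fin k → ℝ), |m y x| ≤ C)
    (hm_dep : ∀ (y y' : ℕ → ℝ) (x x' : ℕ → Fin k → ℝ),
      (∀ i, i ≤ t - 2 → y i = y' i) → (∀ i, i ≤ t - 1 → x i = x' i) → m y x = m y' x') :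
    FHR (volume.restrict (Set.Ioi (0:ℝ)))
      (fun _ y ylag x a => mphDensity lam γ β y ylag x a) T
      (fun y x =>
        (mphRho lam γ β (y t) (y (t - 1)) (x t) -
          mphRho lam γ β (y (t - 1)) (y (t - 2)) (x (t - 1))) * m y x) :=
  mph_simple_moments_FHR_general lam hlam_meas hlam_pos hlam_int hlam_top γ β T t ht1 ht2 m hm_dep

end

end
end

section
/- The Chamberlain–Wooldridge moment function for the Poisson model is FHR. In the Poisson panel data model with T = 2, for any function m : ℕ × ℝ^k → ℝ the function φ(y_0, y_1, y_2, x_1, x_2) = (y_1 − y_2 · e^{(z_1 − z_2)'θ}) · m(y_0, x_1) satisfies the FHR conditions with μ the counting measure on ℕ: (ii) for all (y_0, y_1, x_1, x_2, a), Σ_{y_2 ∈ ℕ} φ(y_0, y_1, y_2, x_1, x_2) f_θ(y_2 | y_1, x_2, a) = (y_1 − e^{z_1'θ + a}) m(y_0, x_1), which does not depend on x_2; and (i) for all (y_0, x_1, x_2, a), Σ_{y_1 ∈ ℕ} Σ_{y_2 ∈ ℕ} φ(y_0, y_1, y_2, x_1, x_2) f_θ(y_2 | y_1, x_2, a) f_θ(y_1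 | y_0, x_1, a) = 0. -/
/-!
Summing out `y₂` against the Poisson law of mean `e^{z₂'θ + a}` replaces `y₂` by that mean,
and the factor `e^{(z₁ - z₂)'θ}` turns it into `e^{z₁'θ + a}`: this is (ii), and the result no
longer involves `x₂`. Summing (ii) out against the Poisson law of `y₁`, whose mean is again
`e^{z₁'θ + a}`, gives (i).
-/

open scoped BigOperators

noncomputable section

variable {k : ℕ}

/-- The linear index `z_t'θ = x_t'θ_x + y_{t−1} θ_y` of the Poisson model, where
`z_t = (x_t', y_{t−1})'` and `θ = (θ_x', θ_y)'`. -/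
noncomputable def poisLin (θx : Fin k → ℝ) (θy : ℝ) (x : Fin k → ℝ) (ylag : ℕ) : ℝ :=
  (∑ i, x i * θx i) + (ylag : ℝ) * θy

/-- The Poisson conditional probability mass function with mean `e^{z'θ + a}`:
`f_θ(y | y₋, x, a) = exp(−e^{z'θ + a}) e^{y (z'θ + a)} / y!`. -/
noncomputable def poisPMF (lin a : ℝ) (y : ℕ) : ℝ :=
  Real.exp (-Real.exp (lin + a)) * Real.exp ((y : ℝ) * (lin + a)) / (Nat.factorial y)

open Real Nat

theorem hasSum_exp_neg_mul_pow_div_factorial (r : ℝ) :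
    HasSum (fun n : ℕ => exp (-r) * r ^ n / n !) 1 := by
  have h := (NormedSpace.expSeries_div_hasSum_exp r).mul_left (exp (-r))
  rw [← exp_eq_exp_ℝ, ← exp_add, neg_add_cancel, exp_zero] at h
  simpa only [mul_div_assoc] using h

theorem hasSum_natCast_mul_exp_neg_mul_pow_div_factorial (r : ℝ) :
    HasSum (fun n : ℕ => n * (exp (-r) * r ^ n / n !)) r := by
  have shift (n : ℕ) : ((n + 1 : ℕ) : ℝ) * (exp (-r) * r ^ (n + 1) / (n + 1)!) =
      r * (exp (-r) * r ^ n / n !) := by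
    rw [factorial_succ, cast_mul]
    field_simp
    ring
  have h := (hasSum_exp_neg_mul_pow_div_factorial r).mul_left r
  rw [mul_one] at h
  simp only [← shift] at h
  simpa using (hasSum_nat_add_iff (f := fun n : ℕ => (n : ℝ) * (exp (-r) * r ^ n / n !)) 1).mp h

theorem poisPMF_eq (lin a : ℝ) (y : ℕ) :
    poisPMF lin a y = exp (-exp (lin + a)) * exp (lin + a) ^ y / y ! := by
  rw [poisPMF, ← exp_nat_mul]

theorem hasSum_affine_mul_poisPMF (lin a c d : ℝ) :
    HasSum (fun y : ℕ => (c + d * y) * poisPMF lin a y) (c + d * exp (lin + a)) := by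
  simp_rw [poisPMF_eq, add_mul, mul_assoc]
  simpa only [mul_one] using ((hasSum_exp_neg_mul_pow_div_factorial _).mul_left c).add
    ((hasSum_natCast_mul_exp_neg_mul_pow_div_factorial _).mul_left d)

theorem tsum_sub_mul_exp_mul_poisPMF (l₁ l₂ a c m : ℝ) :
    ∑' y : ℕ, (c - y * exp (l₁ - l₂)) * m * poisPMF l₂ a y = (c - exp (l₁ + a)) * m := by
  have h := (hasSum_affine_mul_poisPMF l₂ a (c * m) (-(exp (l₁ - l₂) * m))).tsum_eq
  have hmean : exp (l₁ - l₂) * exp (l₂ + a) = exp (l₁ + a) := by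
    rw [← exp_add]; congr 1; ring
  convert h using 1
  · congr 1; funext y; ring
  · rw [← hmean]; ring

theorem tsum_tsum_sub_mul_exp_mul_poisPMF_mul_poisPMF (l₁ : ℝ) (l₂ : ℕ → ℝ) (a m : ℝ) :
    ∑' y₁ : ℕ, (∑' y₂ : ℕ, ((y₁ : ℝ) - y₂ * exp (l₁ - l₂ y₁)) * m * poisPMF (l₂ y₁) a y₂) *
      poisPMF l₁ a y₁ = 0 := by
  simp_rw [tsum_sub_mul_exp_mul_poisPMF]
  convert (hasSum_affine_mul_poisPMF l₁ a (-(exp (l₁ + a) * m)) m).tsum_eq using 1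
  · congr 1; funext y; ring
  · ring

/-- **The Chamberlain–Wooldridge moment function for the Poisson model is FHR.**
For `φ(y_0, y_1, y_2, x_1, x_2) = (y_1 − y_2 e^{(z_1 − z_2)'θ}) m(y_0, x_1)`:
(ii) summing `φ f_θ(y_2 | y_1, x_2, a)` over `y_2 ∈ ℕ` gives
`(y_1 − e^{z_1'θ + a}) m(y_0, x_1)`, which does not depend on `x_2`; and
(i) the double sum of `φ f_θ(y_2|y_1,x_2,a) f_θ(y_1|y_0,x_1,a)` over `(y_1, y_2)`
is zero. -/
theorem poisson_chamberlain_wooldridge_FHR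
    (θx : Fin k → ℝ) (θy : ℝ) (m : ℕ → (Fin k → ℝ) → ℝ) :
    -- condition (ii)
    (∀ (y0 y1 : ℕ) (x1 x2 : Fin k → ℝ) (a : ℝ),
      (∑' y2 : ℕ,
          ((y1 : ℝ) - (y2 : ℝ) *
              Real.exp (poisLin θx θy x1 y0 - poisLin θx θy x2 y1)) * m y0 x1 *
            poisPMF (poisLin θx θy x2 y1) a y2) =
        ((y1 : ℝ) - Real.exp (poisLin θx θy x1 y0 + a)) * m y0 x1) ∧
    -- condition (i)
    (∀ (y0 : ℕ) (x1 x2 : Fin k → ℝ) (a : ℝ),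
      (∑' y1 : ℕ,
          (∑' y2 : ℕ,
            ((y1 : ℝ) - (y2 : ℝ) *
                Real.exp (poisLin θx θy x1 y0 - poisLin θx θy x2 y1)) * m y0 x1 *
              poisPMF (poisLin θx θy x2 y1) a y2) *
            poisPMF (poisLin θx θy x1 y0) a y1) = 0) := by
  exact ⟨fun y0 y1 x1 x2 a => tsum_sub_mul_exp_mul_poisPMF _ _ _ _ _,
    fun y0 x1 x2 a => tsum_tsum_sub_mul_exp_mul_poisPMF_mul_poisPMF _ (poisLin θx θy x2) _ _⟩

end
end

section
/- Nonexistence of nontrivial FHR moment functions in the dynamic binary logit model with feedback (T = 2). Assume β ≠ 0. Let φ : {0,1}³ × ℝ^k × ℝ^k → ℝ be any function satisfying: (ii) for all (y_0, y_1, x_1, a), the sum Σ_{y_2 ∈ {0,1}} φ(y_0, y_1, y_2, x_1, x_2) p_θ(y_2 | y_1, x_2, a) takes the same value for every x_2 ∈ ℝ^k; and (i) for all (y_0, x_1, x_2, a), Σ_{y_1 ∈ {0,1}} Σ_{y_2 ∈ {0,1}} φ(y_0, y_1, y_2, x_1, x_2) p_θ(y_2 | y_1, x_2, a) p_θ(y_1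 | y_0, x_1, a) = 0. Then φ is identically zero. -/
/-!
Nonexistence of nontrivial FHR moment functions in the dynamic binary logit model with
feedback, T = 2 (Bonhomme, Dano & Graham, Section 7.1): if `β ≠ 0`, any function `φ`
satisfying the FHR conditions (i) and (ii) is identically zero.
-/

noncomputable section

variable {k : ℕ}

/-- The dynamic binary logit conditional probability mass function:
`p_θ(y | y₋, x, a) = exp(y(γ y₋ + β'x + a)) / (1 + exp(γ y₋ + β'x + a))`, `y ∈ {0,1}`. -/
noncomputable def logitPMF (γ : ℝ) (β : Fin k → ℝ) (y ylag : Bool) (x : Fin k → ℝ)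
    (a : ℝ) : ℝ :=
  Real.exp ((if y then (1:ℝ) else 0) * (γ * (if ylag then (1:ℝ) else 0) + (∑ i, β i * x i) + a)) /
    (1 + Real.exp (γ * (if ylag then (1:ℝ) else 0) + (∑ i, β i * x i) + a))

lemma BDG_quad_key (A B A' B' p q : ℝ) (hp : 0 < p) (hq : 0 < q)
    (h : ∀ u : ℝ, 0 < u → (A + B * (p * u)) * (1 + q * u) = (A' + B' * (q * u)) * (1 + p * u)) :
    A = A' ∧ B = B' ∧ (p ≠ q → A = B) := by
  have h1 := h 1 one_pos
  have h2 := h 2 two_pos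
  have h3 := h 3 three_pos
  set p0 := A - A' with hp0
  set p1 := A * q + B * p - A' * p - B' * q with hp1
  set p2 := B * p * q - B' * q * p with hp2
  have e1 : p0 + p1 + p2 = 0 := by rw [hp0, hp1, hp2]; linear_combination h1
  have e2 : p0 + 2 * p1 + 4 * p2 = 0 := by rw [hp0, hp1, hp2]; linear_combination h2
  have e3 : p0 + 3 * p1 + 9 * p2 = 0 := by rw [hp0, hp1, hp2]; linear_combination h3
  have z0 : p0 = 0 := by linarith
  have z1 : p1 = 0 := by linarith
  have z2 : p2 = 0 := by linarith
  have hA : A = A' := by rw [hp0] at z0; linarith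
  have hB : B = B' := by
    have hpq : p * q ≠ 0 := mul_ne_zero hp.ne' hq.ne'
    have : (B - B') * (p * q) = 0 := by rw [hp2] at z2; ring_nf; ring_nf at z2; linarith
    rcases mul_eq_zero.mp this with h | h
    · linarith
    · exact absurd h hpq
  refine ⟨hA, hB, fun hne => ?_⟩
  have : (A - B) * (q - p) = 0 := by
    rw [hp1] at z1; rw [← hA, ← hB] at z1; linear_combination z1
  rcases mul_eq_zero.mp this with h | h
  · linarith
  · exact absurd (by linarith : p = q) hne

lemma BDG_lin_key (C D p : ℝ) (hp : 0 < p)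
    (h : ∀ u : ℝ, 0 < u → C + D * (p * u) = 0) : C = 0 ∧ D = 0 := by
  have h1 := h 1 one_pos
  have h2 := h 2 two_pos
  have hD : D * p = 0 := by linarith
  rcases mul_eq_zero.mp hD with h | h
  · constructor <;> [linarith; exact h]
  · exact absurd h hp.ne'

lemma BDG_logit_false (γ : ℝ) (β : Fin k → ℝ) (ylag : Bool) (x : Fin k → ℝ) (a : ℝ) :
    logitPMF γ β false ylag x a =
      1 / (1 + Real.exp (γ * (if ylag then (1:ℝ) else 0) + (∑ i, β i * x i) + a)) := by
  simp [logitPMF]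

lemma BDG_logit_true (γ : ℝ) (β : Fin k → ℝ) (ylag : Bool) (x : Fin k → ℝ) (a : ℝ) :
    logitPMF γ β true ylag x a =
      Real.exp (γ * (if ylag then (1:ℝ) else 0) + (∑ i, β i * x i) + a) /
      (1 + Real.exp (γ * (if ylag then (1:ℝ) else 0) + (∑ i, β i * x i) + a)) := by
  simp [logitPMF]

/-- **Nonexistence of nontrivial FHR moment functions in the dynamic logit model with
feedback (T = 2).** Assume `β ≠ 0`. If `φ` satisfies
(ii) for all `(y_0, y_1, x_1, a)`, `Σ_{y_2} φ(y_0,y_1,y_2,x_1,x_2) p_θ(y_2|y_1,x_2,a)`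
takes the same value for every `x_2`, and
(i) for all `(y_0, x_1, x_2, a)`,
`Σ_{y_1} Σ_{y_2} φ p_θ(y_2|y_1,x_2,a) p_θ(y_1|y_0,x_1,a) = 0`,
then `φ` is identically zero. -/
theorem logit_no_nontrivial_FHR_moments
    (γ : ℝ) (β : Fin k → ℝ) (hβ : β ≠ 0)
    (φ : Bool → Bool → Bool → (Fin k → ℝ) → (Fin k → ℝ) → ℝ)
    -- condition (ii)
    (hii : ∀ (y0 y1 : Bool) (x1 : Fin k → ℝ) (a : ℝ) (x2 x2' : Fin k → ℝ),
      (∑ y2 : Bool, φ y0 y1 y2 x1 x2 * logitPMF γ β y2 y1 x2 a) =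
      (∑ y2 : Bool, φ y0 y1 y2 x1 x2' * logitPMF γ β y2 y1 x2' a))
    -- condition (i)
    (hi : ∀ (y0 : Bool) (x1 x2 : Fin k → ℝ) (a : ℝ),
      (∑ y1 : Bool, (∑ y2 : Bool, φ y0 y1 y2 x1 x2 * logitPMF γ β y2 y1 x2 a) *
        logitPMF γ β y1 y0 x1 a) = 0) :
    ∀ (y0 y1 y2 : Bool) (x1 x2 : Fin k → ℝ), φ y0 y1 y2 x1 x2 = 0 := by
  classical
  obtain ⟨i0, hi0⟩ : ∃ i, β i ≠ 0 := by
    by_contra h; push_neg at h; exact hβ (funext h)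
  -- cross identity from (ii)
  have hcross : ∀ (y0 y1 : Bool) (x1 x2 x2' : Fin k → ℝ),
      φ y0 y1 false x1 x2 = φ y0 y1 false x1 x2' ∧
      φ y0 y1 true x1 x2 = φ y0 y1 true x1 x2' ∧
      ((∑ i, β i * x2 i) ≠ (∑ i, β i * x2' i) →
        φ y0 y1 false x1 x2 = φ y0 y1 true x1 x2) := by
    intro y0 y1 x1 x2 x2'
    set c := (∑ i, β i * x2 i) with hc
    set c' := (∑ i, β i * x2' i) with hc'
    have hmain : ∀ u : ℝ, 0 < u →
        (φ y0 y1 false x1 x2 + φ y0 y1 true x1 x2 * (Real.exp c * u)) *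
          (1 + Real.exp c' * u) =
        (φ y0 y1 false x1 x2' + φ y0 y1 true x1 x2' * (Real.exp c' * u)) *
          (1 + Real.exp c * u) := by
      intro u hu
      set a := Real.log u - γ * (if y1 then (1:ℝ) else 0) with ha
      have hE : ∀ d : ℝ, Real.exp (γ * (if y1 then (1:ℝ) else 0) + d + a) = Real.exp d * u := by
        intro d
        rw [show γ * (if y1 then (1:ℝ) else 0) + d + a = d + Real.log u by rw [ha]; ring,
          Real.exp_add, Real.exp_log hu]
      have h := hii y0 y1 x1 a x2 x2'
      simp only [Fintype.sum_bool, BDG_logit_false, BDG_logit_true, ← hc, ← hc', hE] at h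
      have d1 : (1 : ℝ) + Real.exp c * u ≠ 0 := by positivity
      have d2 : (1 : ℝ) + Real.exp c' * u ≠ 0 := by positivity
      field_simp at h
      linear_combination h
    have hkey := BDG_quad_key _ _ _ _ _ _ (Real.exp_pos c) (Real.exp_pos c') hmain
    refine ⟨hkey.1, hkey.2.1, fun hne => hkey.2.2 ?_⟩
    exact fun h => hne (Real.exp_injective h)
  -- φ is constant in y2 and x2
  have hconst : ∀ (y0 y1 y2 : Bool) (x1 x2 : Fin k → ℝ),
      φ y0 y1 y2 x1 x2 = φ y0 y1 false x1 0 := by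
    intro y0 y1 y2 x1 x2
    have hAB : φ y0 y1 false x1 x2 = φ y0 y1 true x1 x2 := by
      set x2' : Fin k → ℝ := fun j => x2 j + (if j = i0 then (β i0)⁻¹ else 0) with hx2'
      have hsum : (∑ i, β i * x2' i) = (∑ i, β i * x2 i) + 1 := by
        rw [hx2']
        simp only [mul_add, Finset.sum_add_distrib]
        congr 1
        rw [Finset.sum_eq_single i0]
        · simp [mul_inv_cancel₀ hi0]
        · intro b _ hb; simp [hb]
        · intro h; exact absurd (Finset.mem_univ i0) h
      exact (hcross y0 y1 x1 x2 x2').2.2 (by rw [hsum]; linarith)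
    cases y2
    · exact (hcross y0 y1 x1 x2 0).1
    · rw [← hAB]; exact (hcross y0 y1 x1 x2 0).1
  -- condition (i) forces the constants to vanish
  have hzero : ∀ (y0 y1 : Bool) (x1 : Fin k → ℝ), φ y0 y1 false x1 0 = 0 := by
    intro y0 y1 x1
    set ψf := φ y0 false false x1 0 with hψf
    set ψt := φ y0 true false x1 0 with hψt
    set c := (∑ i, β i * x1 i) with hc
    have hmain : ∀ u : ℝ, 0 < u →
        ψf + ψt * (Real.exp (γ * (if y0 then (1:ℝ) else 0) + c) * u) = 0 := by
      intro u hu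
      set a := Real.log u with ha
      have inner : ∀ y1' : Bool,
          (∑ y2 : Bool, φ y0 y1' y2 x1 (0 : Fin k → ℝ) * logitPMF γ β y2 y1' 0 a)
            = φ y0 y1' false x1 0 := by
        intro y1'
        simp only [Fintype.sum_bool, BDG_logit_false, BDG_logit_true]
        rw [hconst y0 y1' true x1 0]
        set Z := Real.exp (γ * (if y1' then (1:ℝ) else 0) + (∑ i, β i * (0:Fin k → ℝ) i) + a)
          with hZ
        have hZpos : 0 < Z := Real.exp_pos _
        have dZ : (1:ℝ) + Z ≠ 0 := by positivity
        field_simp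
        ring
      have h := hi y0 x1 0 a
      rw [Fintype.sum_bool, inner true, inner false] at h
      rw [BDG_logit_false, BDG_logit_true, ← hψf, ← hψt, ← hc] at h
      have hE1 : Real.exp (γ * (if y0 then (1:ℝ) else 0) + c + a)
          = Real.exp (γ * (if y0 then (1:ℝ) else 0) + c) * u := by
        rw [show γ * (if y0 then (1:ℝ) else 0) + c + a
            = (γ * (if y0 then (1:ℝ) else 0) + c) + Real.log u by rw [ha],
          Real.exp_add, Real.exp_log hu]
      rw [hE1] at h
      set E := Real.exp (γ * (if y0 then (1:ℝ) else 0) + c) * u with hEe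
      have hEpos : 0 < E := by rw [hEe]; positivity
      have d3 : (1:ℝ) + E ≠ 0 := by positivity
      field_simp at h
      linear_combination h
    have hk := BDG_lin_key ψf ψt _ (Real.exp_pos _) hmain
    cases y1
    · exact hk.1
    · exact hk.2
  intro y0 y1 y2 x1 x2
  rw [hconst y0 y1 y2 x1 x2, hzero y0 y1 x1]

end
end

section
/- Lemma C.2 in abstract Hilbert-space form (projection onto the span of martingale-difference functions). Let (Ω, ℱ, P) be a probability space, n ≥ 1 an integer, and H_1 ⊆ G_1 ⊆ H_2 ⊆ G_2 ⊆ ⋯ ⊆ H_n ⊆ G_n ⊆ ℱ sub-σ-algebras. Let S ⊆ L²(Ω, ℱ, P) be the set of all sums Σ_{t=1}^n ψ_t where each ψ_t ∈ L²(Ω, ℱ, P) is G_t-measurable and satisfies E[ψ_t | H_t] = 0 almost surely. Then S is a closed linear subspace of L²(Ω, ℱ, P), and for every φ ∈ L²(Ω, ℱ, P) the orthogonal projection of φ onto S equals Σ_{t=1}^n (E[φ | G_t] − E[φ | H_t]). -/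
/-!
For a martingale difference `ψ` of level `s` (`G s`-measurable with `P[ψ|H s] = 0`), the chain
gives `P[ψ|G t] - P[ψ|H t] = if s = t then ψ else 0`: for `s < t` both conditional expectations
return `ψ`, for `s > t` both vanish by the tower property. So `D_t := P[·|G t] - P[·|H t]`
recovers the `t`-th summand of every element of `S`, and `S` is the fixed-point set of the
continuous linear map `Σ_t D_t` on `L²`, hence a closed subspace. For `φ ∈ L²`, `Σ_t D_t φ` lies
in `S` and the residual `r = φ - Σ_t D_t φ` satisfies `D_t r = 0` for every `t`, which makes it
orthogonal to every martingale difference of level `t`.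
-/

open MeasureTheory

noncomputable section

def IsMartingaleDiff {Ω : Type*} {m0 : MeasurableSpace Ω} (P : Measure Ω)
    (mH mG : MeasurableSpace Ω) (ψ : Ω → ℝ) : Prop :=
  MemLp ψ 2 P ∧ StronglyMeasurable[mG] ψ ∧ P[ψ|mH] =ᵐ[P] 0

section General

variable {Ω : Type*} {m mH mG m0 : MeasurableSpace Ω} {P : Measure Ω} [IsFiniteMeasure P]
  {φ ψ h : Ω → ℝ}

theorem isMartingaleDiff_condExp_sub_condExp (hHG : mH ≤ mG) (hG : mG ≤ m0)
    (hφ : MemLp φ 2 P) : IsMartingaleDiff P mH mG (P[φ|mG] - P[φ|mH]) := by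
  refine ⟨(hφ.condExp one_le_two).sub (hφ.condExp one_le_two),
    stronglyMeasurable_condExp.sub (stronglyMeasurable_condExp.mono hHG), ?_⟩
  have hH : mH ≤ m0 := hHG.trans hG
  filter_upwards [condExp_sub (integrable_condExp (m := mG) (μ := P) (f := φ))
    integrable_condExp mH, condExp_condExp_of_le (μ := P) (f := φ) hHG hG] with ω hsub htower
  rw [hsub, Pi.sub_apply, htower,
    condExp_of_stronglyMeasurable hH stronglyMeasurable_condExp integrable_condExp,
    Pi.zero_apply, sub_self]

namespace IsMartingaleDiff

theorem condExp_of_le (hψ : IsMartingaleDiff P mH mG ψ) (hGm : mG ≤ m) (hm : m ≤ m0) :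
    P[ψ|m] = ψ :=
  condExp_of_stronglyMeasurable hm (hψ.2.1.mono hGm) (hψ.1.integrable one_le_two)

theorem condExp_ae_eq_zero_of_le (hψ : IsMartingaleDiff P mH mG ψ) (hmH : m ≤ mH)
    (hH : mH ≤ m0) : P[ψ|m] =ᵐ[P] 0 :=
  calc P[ψ|m] =ᵐ[P] P[P[ψ|mH]|m] := (condExp_condExp_of_le hmH hH).symm
    _ =ᵐ[P] P[(0 : Ω → ℝ)|m] := condExp_congr_ae hψ.2.2
    _ = 0 := condExp_zero

/-- Condition on `mG` to replace `h` by `P[h|mH]`, then on `mH` to replace `ψ` by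
`P[ψ|mH] = 0`. -/
theorem integral_mul_eq_zero (hψ : IsMartingaleDiff P mH mG ψ) (hHG : mH ≤ mG)
    (hG : mG ≤ m0) (hh : MemLp h 2 P) (hcond : P[h|mG] =ᵐ[P] P[h|mH]) :
    ∫ ω, h ω * ψ ω ∂P = 0 := by
  obtain ⟨hψ2, hψG, hψH⟩ := hψ
  have hH : mH ≤ m0 := hHG.trans hG
  have hcH : MemLp (P[h|mH]) 2 P := hh.condExp one_le_two
  have pullG : P[ψ * h|mG] =ᵐ[P] ψ * P[h|mG] :=
    condExp_mul_of_stronglyMeasurable_left hψG (hψ2.integrable_mul hh) (hh.integrable one_le_two)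
  have pullH : P[P[h|mH] * ψ|mH] =ᵐ[P] P[h|mH] * P[ψ|mH] :=
    condExp_mul_of_stronglyMeasurable_left stronglyMeasurable_condExp
      (hcH.integrable_mul hψ2) (hψ2.integrable one_le_two)
  calc ∫ ω, h ω * ψ ω ∂P
      = ∫ ω, (P[ψ * h|mG]) ω ∂P := by
        rw [integral_condExp hG]; simp only [Pi.mul_apply, mul_comm]
    _ = ∫ ω, (P[P[h|mH] * ψ|mH]) ω ∂P := by
        rw [integral_condExp hH]
        refine integral_congr_ae ?_
        filter_upwards [pullG, hcond] with ω h1 h2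
        rw [h1, Pi.mul_apply, Pi.mul_apply, h2, mul_comm]
    _ = 0 := by
        rw [← integral_zero Ω ℝ]
        refine integral_congr_ae ?_
        filter_upwards [pullH, hψH] with ω h1 h2
        rw [h1, Pi.mul_apply, h2, Pi.zero_apply, mul_zero]

end IsMartingaleDiff

def condExpIncrementL2 (hHG : mH ≤ mG) (hG : mG ≤ m0) : Lp ℝ 2 P →L[ℝ] Lp ℝ 2 P :=
  (lpMeas ℝ ℝ mG 2 P).subtypeL ∘L condExpL2 ℝ ℝ hG -
    (lpMeas ℝ ℝ mH 2 P).subtypeL ∘L condExpL2 ℝ ℝ (hHG.trans hG)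

theorem coeFn_condExpIncrementL2 (hHG : mH ≤ mG) (hG : mG ≤ m0) (f : Lp ℝ 2 P) :
    ⇑(condExpIncrementL2 hHG hG f) =ᵐ[P] P[⇑f|mG] - P[⇑f|mH] := by
  have hL2 := fun {m : MeasurableSpace Ω} (hm : m ≤ m0) =>
    (Lp.memLp f).condExpL2_ae_eq_condExp (𝕜 := ℝ) hm
  simp only [Lp.toLp_coeFn] at hL2
  exact (Lp.coeFn_sub _ _).trans ((hL2 hG).sub (hL2 (hHG.trans hG)))

end General

open Finset

structure InterleavedChain {Ω : Type*} (m0 : MeasurableSpace Ω) (n : ℕ)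
    (H G : ℕ → MeasurableSpace Ω) : Prop where
  H_le_G : ∀ t, 1 ≤ t → t ≤ n → H t ≤ G t
  G_le_H_succ : ∀ t, 1 ≤ t → t < n → G t ≤ H (t + 1)
  G_le : ∀ t, 1 ≤ t → t ≤ n → G t ≤ m0

def martingaleDiffSums {Ω : Type*} {m0 : MeasurableSpace Ω} (P : Measure Ω) (n : ℕ)
    (H G : ℕ → MeasurableSpace Ω) : Set (Lp ℝ 2 P) :=
  {f | ∃ ψ : ℕ → Ω → ℝ, (∀ t, 1 ≤ t → t ≤ n → IsMartingaleDiff P (H t) (G t) (ψ t)) ∧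
    ⇑f =ᵐ[P] fun ω => ∑ t ∈ Icc 1 n, ψ t ω}

namespace InterleavedChain

variable {Ω : Type*} {m0 : MeasurableSpace Ω} {P : Measure Ω} [IsFiniteMeasure P]
  {n : ℕ} {H G : ℕ → MeasurableSpace Ω} {s t : ℕ}

theorem H_le (hc : InterleavedChain m0 n H G) (ht1 : 1 ≤ t) (htn : t ≤ n) : H t ≤ m0 :=
  (hc.H_le_G t ht1 htn).trans (hc.G_le t ht1 htn)

theorem G_le_H (hc : InterleavedChain m0 n H G) (hs1 : 1 ≤ s) (hst : s < t) (htn : t ≤ n) :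
    G s ≤ H t := by
  induction t, hst using Nat.le_induction with
  | base => exact hc.G_le_H_succ s hs1 htn
  | succ t hst ih =>
    exact (ih (by omega)).trans <| (hc.H_le_G t (by omega) (by omega)).trans <|
      hc.G_le_H_succ t (by omega) htn

theorem condExp_sub_condExp_ae_eq_ite (hc : InterleavedChain m0 n H G) {ψ : Ω → ℝ}
    (hs1 : 1 ≤ s) (hsn : s ≤ n) (ht1 : 1 ≤ t) (htn : t ≤ n)
    (hψ : IsMartingaleDiff P (H s) (G s) ψ) :
    P[ψ|G t] - P[ψ|H t] =ᵐ[P] if s = t then ψ else 0 := by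
  rcases lt_trichotomy s t with hst | rfl | hst
  · have hGH : G s ≤ H t := hc.G_le_H hs1 hst htn
    rw [hψ.condExp_of_le (hGH.trans (hc.H_le_G t ht1 htn)) (hc.G_le t ht1 htn),
      hψ.condExp_of_le hGH (hc.H_le ht1 htn), if_neg hst.ne, sub_self]
  · rw [hψ.condExp_of_le le_rfl (hc.G_le s hs1 hsn), if_pos rfl]
    filter_upwards [hψ.2.2] with ω h
    rw [Pi.sub_apply, h, Pi.zero_apply, sub_zero]
  · have hGH : G t ≤ H s := hc.G_le_H ht1 hst hsn
    rw [if_neg hst.ne']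
    filter_upwards [hψ.condExp_ae_eq_zero_of_le hGH (hc.H_le hs1 hsn),
      hψ.condExp_ae_eq_zero_of_le ((hc.H_le_G t ht1 htn).trans hGH) (hc.H_le hs1 hsn)]
      with ω hG hH
    rw [Pi.sub_apply, hG, hH, sub_self]
    rfl

theorem condExp_sub_condExp_sum_ae_eq (hc : InterleavedChain m0 n H G) {ψ : ℕ → Ω → ℝ}
    (hψ : ∀ s, 1 ≤ s → s ≤ n → IsMartingaleDiff P (H s) (G s) (ψ s))
    (ht1 : 1 ≤ t) (htn : t ≤ n) :
    P[fun ω => ∑ s ∈ Icc 1 n, ψ s ω|G t] - P[fun ω => ∑ s ∈ Icc 1 n, ψ s ω|H t] =ᵐ[P] ψ t := by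
  have hint : ∀ s ∈ Icc 1 n, Integrable (ψ s) P := fun s hs =>
    (hψ s (mem_Icc.1 hs).1 (mem_Icc.1 hs).2).1.integrable one_le_two
  have hterm : ∀ s ∈ Icc 1 n, P[ψ s|G t] - P[ψ s|H t] =ᵐ[P] if s = t then ψ s else 0 :=
    fun s hs => hc.condExp_sub_condExp_ae_eq_ite (mem_Icc.1 hs).1 (mem_Icc.1 hs).2 ht1 htn
      (hψ s (mem_Icc.1 hs).1 (mem_Icc.1 hs).2)
  rw [← Finset.sum_fn]
  filter_upwards [condExp_finsetSum hint (G t), condExp_finsetSum hint (H t),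
    eventuallyEq_sum hterm] with ω hG hH hD
  simp only [Pi.sub_apply, hG, hH, Finset.sum_apply] at hD ⊢
  rw [← Finset.sum_sub_distrib, hD]
  simp [apply_ite (fun f : Ω → ℝ => f ω), ht1, htn]

theorem mem_martingaleDiffSums_iff (hc : InterleavedChain m0 n H G) {f : Lp ℝ 2 P} :
    f ∈ martingaleDiffSums P n H G ↔
      ⇑f =ᵐ[P] fun ω => ∑ t ∈ Icc 1 n, ((P[⇑f|G t]) ω - (P[⇑f|H t]) ω) := by
  constructor
  · rintro ⟨ψ, hψ, hf⟩
    have hterm : ∀ t ∈ Icc 1 n, P[⇑f|G t] - P[⇑f|H t] =ᵐ[P] ψ t := fun t ht =>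
      (condExp_congr_ae hf).sub (condExp_congr_ae hf) |>.trans <|
        hc.condExp_sub_condExp_sum_ae_eq hψ (mem_Icc.1 ht).1 (mem_Icc.1 ht).2
    filter_upwards [hf, eventuallyEq_sum hterm] with ω hfω hsum
    simpa only [hfω, Finset.sum_apply, Pi.sub_apply] using hsum.symm
  · exact fun hf => ⟨fun t => P[⇑f|G t] - P[⇑f|H t], fun t ht1 htn =>
      isMartingaleDiff_condExp_sub_condExp (hc.H_le_G t ht1 htn) (hc.G_le t ht1 htn)
        (Lp.memLp f), hf⟩

theorem condExp_residual_ae_eq (hc : InterleavedChain m0 n H G) {φ : Ω → ℝ}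
    (hφ : MemLp φ 2 P) (ht1 : 1 ≤ t) (htn : t ≤ n) :
    P[fun ω => φ ω - ∑ s ∈ Icc 1 n, ((P[φ|G s]) ω - (P[φ|H s]) ω)|G t] =ᵐ[P]
      P[fun ω => φ ω - ∑ s ∈ Icc 1 n, ((P[φ|G s]) ω - (P[φ|H s]) ω)|H t] := by
  have hD : ∀ s, 1 ≤ s → s ≤ n → IsMartingaleDiff P (H s) (G s) (P[φ|G s] - P[φ|H s]) :=
    fun s hs1 hsn => isMartingaleDiff_condExp_sub_condExp (hc.H_le_G s hs1 hsn)
      (hc.G_le s hs1 hsn) hφ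
  have hπ : Integrable (fun ω => ∑ s ∈ Icc 1 n, ((P[φ|G s]) ω - (P[φ|H s]) ω)) P :=
    integrable_finsetSum _ fun s hs => (hD s (mem_Icc.1 hs).1 (mem_Icc.1 hs).2).1.integrable
      one_le_two
  have hφ1 : Integrable φ P := hφ.integrable one_le_two
  filter_upwards [condExp_sub hφ1 hπ (G t), condExp_sub hφ1 hπ (H t),
    hc.condExp_sub_condExp_sum_ae_eq hD ht1 htn] with ω hG hH hsum
  simp only [Pi.sub_apply] at hG hH hsum
  exact hG.trans (by linarith) |>.trans hH.symm

theorem integral_mul_eq_zero_of_mem_martingaleDiffSums (hc : InterleavedChain m0 n H G)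
    {h : Ω → ℝ} (hh : MemLp h 2 P) (hcond : ∀ t, 1 ≤ t → t ≤ n → P[h|G t] =ᵐ[P] P[h|H t])
    {g : Lp ℝ 2 P} (hg : g ∈ martingaleDiffSums P n H G) : ∫ ω, h ω * g ω ∂P = 0 := by
  obtain ⟨ψ, hψ, hgψ⟩ := hg
  calc ∫ ω, h ω * g ω ∂P = ∫ ω, ∑ t ∈ Icc 1 n, h ω * ψ t ω ∂P := by
        refine integral_congr_ae ?_
        filter_upwards [hgψ] with ω hω
        rw [hω, Finset.mul_sum]
    _ = ∑ t ∈ Icc 1 n, ∫ ω, h ω * ψ t ω ∂P :=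
        integral_finsetSum _ fun t ht =>
          hh.integrable_mul (hψ t (mem_Icc.1 ht).1 (mem_Icc.1 ht).2).1
    _ = 0 := Finset.sum_eq_zero fun t ht => by
        obtain ⟨ht1, htn⟩ := mem_Icc.1 ht
        exact (hψ t ht1 htn).integral_mul_eq_zero (hc.H_le_G t ht1 htn) (hc.G_le t ht1 htn) hh
          (hcond t ht1 htn)

def projL2 (hc : InterleavedChain m0 n H G) : Lp ℝ 2 P →L[ℝ] Lp ℝ 2 P :=
  ∑ t ∈ (Icc 1 n).attach, condExpIncrementL2 (hc.H_le_G t (mem_Icc.1 t.2).1 (mem_Icc.1 t.2).2)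
    (hc.G_le t (mem_Icc.1 t.2).1 (mem_Icc.1 t.2).2)

theorem coeFn_projL2 (hc : InterleavedChain m0 n H G) (f : Lp ℝ 2 P) :
    ⇑(hc.projL2 f) =ᵐ[P] fun ω => ∑ t ∈ Icc 1 n, ((P[⇑f|G t]) ω - (P[⇑f|H t]) ω) := by
  have hterm : ∀ t ∈ (Icc 1 n).attach, ⇑(condExpIncrementL2
      (hc.H_le_G t (mem_Icc.1 t.2).1 (mem_Icc.1 t.2).2)
      (hc.G_le t (mem_Icc.1 t.2).1 (mem_Icc.1 t.2).2) f) =ᵐ[P] P[⇑f|G t] - P[⇑f|H t] :=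
    fun t _ => coeFn_condExpIncrementL2 _ _ f
  rw [projL2, _root_.sum_apply]
  refine (Lp.coeFn_fun_finsetSum _ _).trans ?_
  filter_upwards [eventuallyEq_sum hterm] with ω h2
  simpa only [Finset.sum_apply, Pi.sub_apply, Finset.sum_attach (Icc 1 n)
    (fun t => (P[⇑f|G t]) ω - (P[⇑f|H t]) ω)] using h2

theorem martingaleDiffSums_eq_setOf_projL2_eq (hc : InterleavedChain m0 n H G) :
    martingaleDiffSums P n H G = {f | hc.projL2 f = f} := by
  ext f
  rw [hc.mem_martingaleDiffSums_iff, Set.mem_ofPred_eq, Lp.ext_iff]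
  exact ⟨fun hf => (hc.coeFn_projL2 f).trans hf.symm, fun hf => hf.symm.trans (hc.coeFn_projL2 f)⟩

end InterleavedChain

theorem lemmaC2_projection_general
    {Ω : Type*} [m0 : MeasurableSpace Ω] (P : Measure Ω) [IsProbabilityMeasure P]
    (n : ℕ) (H G : ℕ → MeasurableSpace Ω)
    -- the chain H_1 ⊆ G_1 ⊆ H_2 ⊆ G_2 ⊆ ⋯ ⊆ H_n ⊆ G_n ⊆ ℱ
    (hHG : ∀ t, 1 ≤ t → t ≤ n → H t ≤ G t)
    (hGH : ∀ t, 1 ≤ t → t < n → G t ≤ H (t + 1))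
    (hGm : ∀ t, 1 ≤ t → t ≤ n → G t ≤ m0)
    -- S : the set of sums of martingale-difference functions, as a subset of L²
    (S : Set (Lp ℝ 2 P))
    (hS : S = {f : Lp ℝ 2 P | ∃ ψ : ℕ → Ω → ℝ,
      (∀ t, 1 ≤ t → t ≤ n →
        MemLp (ψ t) 2 P ∧ StronglyMeasurable[G t] (ψ t) ∧ P[ψ t|H t] =ᵐ[P] 0) ∧
      ⇑f =ᵐ[P] fun ω => ∑ t ∈ Finset.Icc 1 n, ψ t ω}) :
    -- S is a closed linear subspace of L²
    ((0 : Lp ℝ 2 P) ∈ S ∧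
      (∀ f g : Lp ℝ 2 P, f ∈ S → g ∈ S → f + g ∈ S) ∧
      (∀ (c : ℝ) (f : Lp ℝ 2 P), f ∈ S → c • f ∈ S) ∧
      IsClosed S) ∧
    -- and the orthogonal projection of any φ ∈ L² onto S is Σ_t (E[φ|G_t] − E[φ|H_t])
    (∀ φ : Ω → ℝ, MemLp φ 2 P →
      ∃ hproj : MemLp (fun ω => ∑ t ∈ Finset.Icc 1 n, ((P[φ|G t]) ω - (P[φ|H t]) ω)) 2 P,
        hproj.toLp _ ∈ S ∧
        ∀ g ∈ S, (∫ ω, (φ ω - ∑ t ∈ Finset.Icc 1 n, ((P[φ|G t]) ω - (P[φ|H t]) ω)) *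
          (g : Lp ℝ 2 P) ω ∂P) = 0) := by
  have hc : InterleavedChain m0 n H G := ⟨hHG, hGH, hGm⟩
  replace hS : S = martingaleDiffSums P n H G := hS
  refine ⟨?_, fun φ hφ => ?_⟩
  · rw [hS, hc.martingaleDiffSums_eq_setOf_projL2_eq]
    exact ⟨map_zero _, fun f g hf hg => (map_add _ f g).trans (congrArg₂ _ hf hg),
      fun c f hf => (map_smul _ c f).trans (congrArg _ hf),
      isClosed_eq hc.projL2.continuous continuous_id⟩
  have hD : ∀ t, 1 ≤ t → t ≤ n → IsMartingaleDiff P (H t) (G t) (P[φ|G t] - P[φ|H t]) :=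
    fun t ht1 htn => isMartingaleDiff_condExp_sub_condExp (hHG t ht1 htn) (hGm t ht1 htn) hφ
  have hπ : MemLp (fun ω => ∑ t ∈ Finset.Icc 1 n, ((P[φ|G t]) ω - (P[φ|H t]) ω)) 2 P :=
    memLp_finsetSum _ fun t ht => (hD t (mem_Icc.1 ht).1 (mem_Icc.1 ht).2).1
  refine ⟨hπ, hS ▸ ⟨_, hD, hπ.coeFn_toLp⟩, fun g hg => ?_⟩
  exact hc.integral_mul_eq_zero_of_mem_martingaleDiffSums (hφ.sub hπ)
    (fun t ht1 htn => hc.condExp_residual_ae_eq hφ ht1 htn) (hS ▸ hg)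

/-- **Lemma C.2 (projection onto the span of martingale-difference functions).**
Let `H_1 ⊆ G_1 ⊆ H_2 ⊆ G_2 ⊆ ⋯ ⊆ H_n ⊆ G_n ⊆ ℱ` be sub-σ-algebras of a probability
space `(Ω, ℱ, P)` and let `S ⊆ L²(Ω, ℱ, P)` be the set of all sums `Σ_{t=1}^n ψ_t`
with each `ψ_t` square-integrable, `G_t`-measurable and with `E[ψ_t | H_t] = 0` a.s.
Then `S` is a closed linear subspace of `L²`, and for every `φ ∈ L²`, the function
`Σ_{t=1}^n (E[φ | G_t] − E[φ | H_t])` belongs to `S` and `φ − Σ_t (E[φ|G_t] − E[φ|H_t])`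
is orthogonal to every element of `S` — i.e. it is the orthogonal projection of `φ`
onto `S`. -/
theorem lemmaC2_projection
    {Ω : Type*} [m0 : MeasurableSpace Ω] (P : Measure Ω) [IsProbabilityMeasure P]
    (n : ℕ) (hn : 1 ≤ n) (H G : ℕ → MeasurableSpace Ω)
    -- the chain H_1 ⊆ G_1 ⊆ H_2 ⊆ G_2 ⊆ ⋯ ⊆ H_n ⊆ G_n ⊆ ℱ
    (hHG : ∀ t, 1 ≤ t → t ≤ n → H t ≤ G t)
    (hGH : ∀ t, 1 ≤ t → t < n → G t ≤ H (t + 1))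
    (hGm : ∀ t, 1 ≤ t → t ≤ n → G t ≤ m0)
    -- S : the set of sums of martingale-difference functions, as a subset of L²
    (S : Set (Lp ℝ 2 P))
    (hS : S = {f : Lp ℝ 2 P | ∃ ψ : ℕ → Ω → ℝ,
      (∀ t, 1 ≤ t → t ≤ n →
        MemLp (ψ t) 2 P ∧ StronglyMeasurable[G t] (ψ t) ∧ P[ψ t|H t] =ᵐ[P] 0) ∧
      ⇑f =ᵐ[P] fun ω => ∑ t ∈ Finset.Icc 1 n, ψ t ω}) :
    -- S is a closed linear subspace of L²
    ((0 : Lp ℝ 2 P) ∈ S ∧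
      (∀ f g : Lp ℝ 2 P, f ∈ S → g ∈ S → f + g ∈ S) ∧
      (∀ (c : ℝ) (f : Lp ℝ 2 P), f ∈ S → c • f ∈ S) ∧
      IsClosed S) ∧
    -- and the orthogonal projection of any φ ∈ L² onto S is Σ_t (E[φ|G_t] − E[φ|H_t])
    (∀ φ : Ω → ℝ, MemLp φ 2 P →
      ∃ hproj : MemLp (fun ω => ∑ t ∈ Finset.Icc 1 n, ((P[φ|G t]) ω - (P[φ|H t]) ω)) 2 P,
        hproj.toLp _ ∈ S ∧
        ∀ g ∈ S, (∫ ω, (φ ω - ∑ t ∈ Finset.Icc 1 n, ((P[φ|G t]) ω - (P[φ|H t]) ω)) *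
          (g : Lp ℝ 2 P) ω ∂P) = 0) :=
  lemmaC2_projection_general (m0 := m0) P n H G hHG hGH hGm S hS
end
end
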